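/- arXiv:1811.11344 — 18 statements merged into one kernel-verified Lean document; each statement's English description precedes it below -/
import Mathlib

section
/- Let q be a prime power and r, s, d positive integers with sd = q-1. Let h ∈ F_q[x] and define g(x) = x^r·h(x)^s. Then f(x) = x^r·h(x^s) is an involution on F_q (i.e., f(f(x)) = x for all x ∈ F_q) if and only if (1) r² ≡ 1 (mod s), and (2) z^((r²-1)/s)·h(g(z))·h(z)^r = 1 for all z in the set μ_d of d-th roots of unity in F_q*. -/
-- surjectivity of s-power map onto d-th roots of unity
lemma aux_pow_surj (F : Type*) [Field F] [Fintype F] (s d : ℕ) (hd : 0 < d)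
    (hsd : s * d = Fintype.card F - 1) (z : F) (hz0 : z ≠ 0) (hz : z ^ d = 1) :
    ∃ x : F, x ≠ 0 ∧ x ^ s = z := by
  classical
  obtain ⟨γ, hγ⟩ := IsCyclic.exists_generator (α := Fˣ)
  have hord : orderOf γ = s * d := by
    rw [orderOf_eq_card_of_forall_mem_zpowers hγ, Nat.card_eq_fintype_card, Fintype.card_units, hsd]
  set u : Fˣ := Units.mk0 z hz0 with hu
  have hud : u ^ d = 1 := by
    ext
    simp [hu, hz]
  obtain ⟨m, hm⟩ := hγ u
  simp only at hm
  have hdvd : ((s * d : ℕ) : ℤ) ∣ m * d := by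
    rw [← hord]
    rw [orderOf_dvd_iff_zpow_eq_one]
    rw [zpow_mul, hm]
    rw [← zpow_natCast u d] at hud
    exact hud
  have hsm : (s : ℤ) ∣ m := by
    push_cast at hdvd
    have hd' : (d : ℤ) ≠ 0 := by exact_mod_cast hd.ne'
    exact (mul_dvd_mul_iff_right hd').mp hdvd
  obtain ⟨t, ht⟩ := hsm
  refine ⟨((γ ^ t : Fˣ) : F), Units.ne_zero _, ?_⟩
  have : ((γ ^ t) ^ s : Fˣ) = u := by
    rw [← zpow_natCast (γ ^ t) s, ← zpow_mul, mul_comm, ← ht, hm]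
  calc ((γ ^ t : Fˣ) : F) ^ s = (((γ ^ t) ^ s : Fˣ) : F) := by push_cast; ring
    _ = z := by rw [this]; rfl

theorem stmt_0 (F : Type*) [Field F] [Fintype F]
    (r s d : ℕ) (hr : 0 < r) (hs : 0 < s) (hd : 0 < d)
    (hsd : s * d = Fintype.card F - 1)
    (h : Polynomial F)
    (f g : F → F)
    (hf : ∀ x, f x = x ^ r * h.eval (x ^ s))
    (hg : ∀ x, g x = x ^ r * (h.eval x) ^ s) :
    (∀ x : F, f (f x) = x) ↔
      (r ^ 2 ≡ 1 [MOD s] ∧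
        ∀ z : F, z ^ d = 1 →
          z ^ ((r ^ 2 - 1) / s) * h.eval (g z) * (h.eval z) ^ r = 1) := by
  classical
  have hr2 : 1 ≤ r ^ 2 := Nat.one_le_pow _ _ hr
  have key : ∀ x : F, f (f x) = x ^ (r ^ 2) * h.eval (g (x ^ s)) * (h.eval (x ^ s)) ^ r := by
    intro x
    rw [hf (f x), hf x, hg]
    have e1 : (x ^ r * h.eval (x ^ s)) ^ r = x ^ (r ^ 2) * (h.eval (x ^ s)) ^ r := by
      rw [mul_pow, ← pow_mul, sq]
    have e2 : (x ^ r * h.eval (x ^ s)) ^ s = (x ^ s) ^ r * (h.eval (x ^ s)) ^ s := by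
      rw [mul_pow, ← pow_mul, ← pow_mul, mul_comm r s]
    rw [e1, e2]
    ring
  constructor
  · intro hinv
    have hC : h.eval (g 1) * (h.eval 1) ^ r = 1 := by
      have := key 1
      rw [hinv 1] at this
      simpa using this.symm
    -- get a primitive s-th root of unity to show s ∣ r^2 - 1
    obtain ⟨γ, hγ⟩ := IsCyclic.exists_generator (α := Fˣ)
    have hord : orderOf γ = s * d := by
      rw [orderOf_eq_card_of_forall_mem_zpowers hγ, Nat.card_eq_fintype_card, Fintype.card_units, hsd]
    set ζ : Fˣ := γ ^ d with hζ
    have hζs : ((ζ : F)) ^ s = 1 := by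
      have : ζ ^ s = 1 := by
        rw [hζ, ← pow_mul, mul_comm, ← hord, pow_orderOf_eq_one]
      calc ((ζ : F)) ^ s = ((ζ ^ s : Fˣ) : F) := by push_cast; ring
        _ = 1 := by rw [this]; rfl
    have hζord : orderOf ζ = s := by
      rw [hζ, orderOf_pow, hord, Nat.gcd_eq_right ⟨s, mul_comm s d⟩, Nat.mul_div_cancel _ hd]
    have hζr : ζ ^ (r ^ 2 - 1) = 1 := by
      have hk := key (ζ : F)
      rw [hinv, hζs, mul_assoc, hC, mul_one] at hk
      have hne : ((ζ : F)) ≠ 0 := Units.ne_zero _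
      have hfield : ((ζ : F)) ^ (r ^ 2 - 1) = 1 := by
        rw [show r ^ 2 = (r ^ 2 - 1) + 1 by omega, pow_succ] at hk
        exact mul_right_cancel₀ hne (by rw [← hk, one_mul])
      have hv : ((ζ ^ (r ^ 2 - 1) : Fˣ) : F) = ((1 : Fˣ) : F) := by
        push_cast
        simp [hfield]
      exact Units.ext hv
    have hsdvd : s ∣ r ^ 2 - 1 := hζord ▸ orderOf_dvd_of_pow_eq_one hζr
    refine ⟨((Nat.modEq_iff_dvd' hr2).mpr hsdvd).symm, ?_⟩
    intro z hz
    have hz0 : z ≠ 0 := by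
      intro h0; rw [h0, zero_pow hd.ne'] at hz; exact zero_ne_one hz
    obtain ⟨x, hx0, hxs⟩ := aux_pow_surj F s d hd hsd z hz0 hz
    have hk := key x
    rw [hinv, hxs] at hk
    have hxr : x ^ (r ^ 2) = x * z ^ ((r ^ 2 - 1) / s) := by
      have he : r ^ 2 = 1 + s * ((r ^ 2 - 1) / s) := by
        rw [Nat.mul_div_cancel' hsdvd]
        omega
      conv_lhs => rw [he]
      rw [pow_add, pow_one, pow_mul, hxs]
    rw [hxr] at hk
    exact mul_left_cancel₀ hx0 (by rw [mul_one]; linear_combination -hk)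
  · rintro ⟨hmod, hcond⟩ x
    rcases eq_or_ne x 0 with rfl | hx0
    · have hf0 : f 0 = 0 := by rw [hf, zero_pow hr.ne', zero_mul]
      rw [hf0, hf0]
    · have hz : (x ^ s) ^ d = 1 := by
        rw [← pow_mul, hsd, FiniteField.pow_card_sub_one_eq_one x hx0]
      have hsdvd : s ∣ r ^ 2 - 1 := (Nat.modEq_iff_dvd' hr2).mp hmod.symm
      have hxr : x ^ (r ^ 2) = x * (x ^ s) ^ ((r ^ 2 - 1) / s) := by
        have he : r ^ 2 = 1 + s * ((r ^ 2 - 1) / s) := by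
          rw [Nat.mul_div_cancel' hsdvd]; omega
        conv_lhs => rw [he]
        rw [pow_add, pow_one, pow_mul]
      rw [key x, hxr]
      have := hcond (x ^ s) hz
      calc x * (x ^ s) ^ ((r ^ 2 - 1) / s) * h.eval (g (x ^ s)) * h.eval (x ^ s) ^ r
          = x * ((x ^ s) ^ ((r ^ 2 - 1) / s) * h.eval (g (x ^ s)) * h.eval (x ^ s) ^ r) := by ring
        _ = x := by rw [this, mul_one]
end

section
/- Let q be a prime power, s a divisor of q-1, d = (q-1)/s, r a positive integer, and h ∈ F_q[x]. If f(x) = x^r·h(x^s) is an involution on F_q, then g(x) = x^r·h(x)^s is an involution on the subgroup μ_d of d-th roots of unity in F_q*, i.e., g maps μ_d to μ_d and g(g(z)) = z for all z ∈ μ_d. -/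
/-!
Conjugating by `x ↦ x ^ s` turns `f` into `g`: `g (x ^ s) = f x ^ s`. Every `z ∈ μ_d` is an
`s`-th power `w ^ s` of a unit, since in the cyclic group `F_qˣ` the image of `x ↦ x ^ s` and the
kernel of `x ↦ x ^ d` both have order `d`. Hence `g (g z) = g (f w ^ s) = f (f w) ^ s = z`, and
`g z = f w ^ s` lies in `μ_d` because `f` fixes `0` and is bijective, so `f w ≠ 0`.
-/

theorem IsCyclic.range_powMonoidHom_eq_ker {G : Type*} [CommGroup G] [IsCyclic G] [Finite G]
    {s : ℕ} (hs : s ∣ Nat.card G) :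
    (powMonoidHom s : G →* G).range = (powMonoidHom (Nat.card G / s)).ker := by
  apply Subgroup.eq_of_le_of_card_ge
  · rintro _ ⟨w, rfl⟩
    rw [MonoidHom.mem_ker, powMonoidHom_apply, powMonoidHom_apply, ← pow_mul,
      Nat.mul_div_cancel' hs, pow_card_eq_one']
  · rw [card_powMonoidHom_ker, card_powMonoidHom_range, Nat.gcd_eq_right hs,
      Nat.gcd_eq_right (Nat.div_dvd_of_dvd hs)]

theorem FiniteField.exists_unit_pow_eq_of_pow_eq_one {F : Type*} [Field F] [Fintype F] {s : ℕ}
    (hs : s ∣ Fintype.card F - 1) {z : F} (hz : z ^ ((Fintype.card F - 1) / s) = 1) :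
    ∃ w : Fˣ, (w : F) ^ s = z := by
  have hcard : Nat.card Fˣ = Fintype.card F - 1 := by
    rw [Nat.card_units, Nat.card_eq_fintype_card]
  have hq : 0 < Fintype.card F - 1 := Nat.sub_pos_of_lt Fintype.one_lt_card
  have hd : 0 < (Fintype.card F - 1) / s :=
    Nat.div_pos (Nat.le_of_dvd hq hs) (Nat.pos_of_dvd_of_pos hs hq)
  have hz0 : z ≠ 0 := by
    rintro rfl
    exact zero_ne_one ((zero_pow hd.ne').symm.trans hz)
  have hmem : Units.mk0 z hz0 ∈ (powMonoidHom (Nat.card Fˣ / s) : Fˣ →* Fˣ).ker := by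
    rw [MonoidHom.mem_ker, hcard]
    exact Units.ext (by simpa using hz)
  rw [← IsCyclic.range_powMonoidHom_eq_ker (hcard ▸ hs)] at hmem
  obtain ⟨w, hw⟩ := hmem
  exact ⟨w, by simpa using congrArg Units.val hw⟩

theorem stmt_1_general (F : Type*) [Field F] [Fintype F]
    (r s d : ℕ) (hr : 0 < r) (hs : s ∣ Fintype.card F - 1)
    (hd : d = (Fintype.card F - 1) / s)
    (h : Polynomial F)
    (f g : F → F)
    (hf : ∀ x, f x = x ^ r * h.eval (x ^ s))
    (hg : ∀ x, g x = x ^ r * (h.eval x) ^ s)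
    (hinv : ∀ x : F, f (f x) = x) :
    ∀ z : F, z ^ d = 1 → (g z) ^ d = 1 ∧ g (g z) = z := by
  intro z hz
  have hconj : ∀ x, g (x ^ s) = f x ^ s := fun x => by
    rw [hg, hf, mul_pow, ← pow_mul, ← pow_mul, mul_comm r s]
  obtain ⟨w, rfl⟩ := FiniteField.exists_unit_pow_eq_of_pow_eq_one hs (hd ▸ hz)
  have hfw : f w ≠ 0 := fun h0 => by
    have := hinv w
    rw [h0, hf, zero_pow hr.ne', zero_mul] at this
    exact w.ne_zero this.symm
  refine ⟨?_, by rw [hconj, hconj, hinv]⟩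
  rw [hconj, ← pow_mul, hd, Nat.mul_div_cancel' hs]
  exact FiniteField.pow_card_sub_one_eq_one _ hfw

theorem stmt_1 (F : Type*) [Field F] [Fintype F]
    (r s d : ℕ) (hr : 0 < r) (hs : s ∣ Fintype.card F - 1) (hspos : 0 < s)
    (hd : d = (Fintype.card F - 1) / s)
    (h : Polynomial F)
    (f g : F → F)
    (hf : ∀ x, f x = x ^ r * h.eval (x ^ s))
    (hg : ∀ x, g x = x ^ r * (h.eval x) ^ s)
    (hinv : ∀ x : F, f (f x) = x) :
    ∀ z : F, z ^ d = 1 → (g z) ^ d = 1 ∧ g (g z) = z :=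
  stmt_1_general F r s d hr hs hd h f g hf hg hinv
end

section
/- Let q be a power of a prime, r a positive integer with r² ≡ 1 (mod q-1), and a ∈ F_q* with a^(r+1) = 1. Then the monomial f(x) = a·x^r is an involution on F_q, and conversely if a·x^r is an involution on F_q (with q > 2) then r² ≡ 1 (mod q-1) and a^(r+1) = 1. -/
theorem stmt_2 (F : Type*) [Field F] [Fintype F]
    (r : ℕ) (hr : 0 < r) (a : F) (ha : a ≠ 0)
    (f : F → F) (hf : ∀ x, f x = a * x ^ r) :
    ((r ^ 2 ≡ 1 [MOD Fintype.card F - 1] ∧ a ^ (r + 1) = 1) →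
        ∀ x : F, f (f x) = x) ∧
    (2 < Fintype.card F → (∀ x : F, f (f x) = x) →
        (r ^ 2 ≡ 1 [MOD Fintype.card F - 1] ∧ a ^ (r + 1) = 1)) := by
  have hr2 : 1 ≤ r ^ 2 := Nat.one_le_pow _ _ hr
  have key : ∀ x : F, f (f x) = a ^ (r + 1) * x ^ (r ^ 2) := by
    intro x
    rw [hf, hf, mul_pow, ← pow_mul, sq]; ring
  constructor
  · rintro ⟨hmod, haone⟩ x
    rw [key, haone, one_mul]
    rcases eq_or_ne x 0 with rfl | hx
    · rw [zero_pow (by omega)]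
    · have hdvd : (Fintype.card F - 1) ∣ r ^ 2 - 1 := (Nat.modEq_iff_dvd' hr2).mp hmod.symm
      have h1 : x ^ (Fintype.card F - 1) = 1 := FiniteField.pow_card_sub_one_eq_one x hx
      obtain ⟨k, hk⟩ := hdvd
      have : x ^ (r ^ 2) = x ^ (1 + (r ^ 2 - 1)) := by congr 1; omega
      rw [this, pow_add, hk, pow_mul, h1, one_pow, mul_one, pow_one]
  · intro hcard hinv
    have haone : a ^ (r + 1) = 1 := by
      have := hinv 1
      rwa [key, one_pow, mul_one] at this
    refine ⟨?_, haone⟩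
    have hx : ∀ x : F, x ≠ 0 → x ^ (r ^ 2 - 1) = 1 := by
      intro x hx
      have := hinv x
      rw [key, haone, one_mul] at this
      have h1 : x ^ (r ^ 2) = x ^ (1 + (r ^ 2 - 1)) := by congr 1; omega
      rw [h1, pow_add, pow_one] at this
      exact mul_left_cancel₀ hx (by rw [mul_one]; exact this)
    obtain ⟨g, hg⟩ := IsCyclic.exists_generator (α := Fˣ)
    have horder : orderOf g = Fintype.card F - 1 := by
      classical
      rw [orderOf_eq_card_of_forall_mem_zpowers hg, Nat.card_eq_fintype_card, Fintype.card_units]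
    have hgpow : (g : F) ^ (r ^ 2 - 1) = 1 := hx g g.ne_zero
    have hdvd : (Fintype.card F - 1) ∣ r ^ 2 - 1 := by
      rw [← horder]
      exact orderOf_dvd_of_pow_eq_one (by ext; push_cast [hgpow]; rfl)
    exact ((Nat.modEq_iff_dvd' hr2).mpr hdvd).symm
end

section
/- Let q be an odd prime power and let δ ∈ F_q* be a non-square element. Then f(x) = ((δ²-1)/(2δ))·x^((q+1)/2) + ((δ²+1)/(2δ))·x is an involution on F_q. -/
theorem stmt_3 (F : Type*) [Field F] [Fintype F]
    (hodd : Odd (Fintype.card F))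
    (δ : F) (hδ : δ ≠ 0) (hns : δ ^ ((Fintype.card F - 1) / 2) = -1)
    (f : F → F)
    (hf : ∀ x, f x = (δ ^ 2 - 1) / (2 * δ) * x ^ ((Fintype.card F + 1) / 2) +
        (δ ^ 2 + 1) / (2 * δ) * x) :
    ∀ x : F, f (f x) = x := by
  intro x
  have hchar : ringChar F ≠ 2 := by
    intro h
    have := FiniteField.even_card_iff_char_two.mp h
    obtain ⟨m, hm⟩ := hodd
    omega
  have h2 : (2 : F) ≠ 0 := Ring.two_ne_zero hchar
  have hq1 : 1 ≤ Fintype.card F := Fintype.card_pos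
  have he : (Fintype.card F + 1) / 2 = (Fintype.card F - 1) / 2 + 1 := by
    obtain ⟨m, hm⟩ := hodd; omega
  set e := (Fintype.card F - 1) / 2 with hedef
  have hcv : Fintype.card F / 2 = e := by
    obtain ⟨m, hm⟩ := hodd; omega
  have hpow : ∀ y : F, y ^ ((Fintype.card F + 1) / 2) = y ^ e * y := by
    intro y; rw [he, pow_succ]
  rcases eq_or_ne x 0 with rfl | hx
  · have h0 : f 0 = 0 := by
      rw [hf]
      have : (0 : F) ^ ((Fintype.card F + 1) / 2) = 0 := by
        rw [hpow]; ring
      rw [this]; ring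
    rw [h0, h0]
  · rcases FiniteField.pow_dichotomy hchar hx with h1 | h1 <;> rw [hcv] at h1
    · -- x is a square: f x = δ * x
      have hfx : f x = δ * x := by
        rw [hf, hpow, h1, one_mul]
        field_simp
        ring
      have hdx : (δ * x) ^ e = -1 := by
        rw [mul_pow, hns, h1]; ring
      rw [hfx, hf, hpow, hdx]
      field_simp
      ring
    · -- x nonsquare: f x = δ⁻¹ * x
      have hfx : f x = δ⁻¹ * x := by
        rw [hf, hpow, h1]
        field_simp
        ring
      have hdx : (δ⁻¹ * x) ^ e = 1 := by
        rw [mul_pow, inv_pow, hns, h1]; norm_num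
      rw [hfx, hf, hpow, hdx, one_mul]
      field_simp
      ring
end

section
/- Let q be an odd prime power, a, b ∈ F_q with a ≠ b, and r a positive integer. Then f(x) = ((a-b)/2)·x^((q-1)/2 + r) + ((a+b)/2)·x^r is an involution on F_q if and only if: (1) r² ≡ 1 (mod (q-1)/2); (2) ((a-b)/2)·a^((q-1)/2+r) + ((a+b)/2)·a^r = 1; and (3) (-1)^r·((a-b)/2)·b^((q-1)/2+r) + ((a+b)/2)·b^r = (-1)^(2(r²-1)/(q-1)). -/
theorem stmt_4 (F : Type*) [Field F] [Fintype F]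
    (hodd : Odd (Fintype.card F))
    (a b : F) (hab : a ≠ b) (r : ℕ) (hr : 0 < r)
    (f : F → F)
    (hf : ∀ x, f x = (a - b) / 2 * x ^ ((Fintype.card F - 1) / 2 + r) +
        (a + b) / 2 * x ^ r) :
    (∀ x : F, f (f x) = x) ↔
      (r ^ 2 ≡ 1 [MOD (Fintype.card F - 1) / 2] ∧
        (a - b) / 2 * a ^ ((Fintype.card F - 1) / 2 + r) + (a + b) / 2 * a ^ r = 1 ∧
        (-1 : F) ^ r * ((a - b) / 2) * b ^ ((Fintype.card F - 1) / 2 + r) +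
            (a + b) / 2 * b ^ r =
          (-1 : F) ^ (2 * (r ^ 2 - 1) / (Fintype.card F - 1))) := by
  classical
  have h2q : 2 ≤ Fintype.card F := Fintype.one_lt_card
  obtain ⟨m, hm⟩ := hodd
  set q := Fintype.card F with hq
  set s := (q - 1) / 2 with hs
  set c := (a - b) / 2 with hc
  set d := (a + b) / 2 with hd
  have hq1 : q - 1 = 2 * s := by omega
  have hs1 : 1 ≤ s := by omega
  have hrr1 : 1 ≤ r * r := Nat.one_le_iff_ne_zero.mpr (Nat.mul_ne_zero hr.ne' hr.ne')
  have hr2 : 1 ≤ r ^ 2 := Nat.one_le_pow 2 r hr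
  have hpw : r ^ 2 = r * r := pow_two r
  have h2F : (2 : F) ≠ 0 := by
    refine Ring.two_ne_zero ?_
    intro h
    have := FiniteField.even_card_of_char_two (F := F) h
    omega
  have hcd : c + d = a := by rw [hc, hd]; field_simp; ring
  have hdc : d - c = b := by rw [hc, hd]; field_simp; ring
  -- key evaluation of f
  have key : ∀ x : F, f x = (c * x ^ s + d) * x ^ r := by
    intro x
    rw [hf x, pow_add]; ring
  have chis : ∀ e x : F, (e * x ^ r) ^ s = e ^ s * (x ^ s) ^ r := by
    intro e x
    rw [mul_pow, ← pow_mul, mul_comm r s, pow_mul]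
  have hchi : ∀ x : F, x ≠ 0 → x ^ s = 1 ∨ x ^ s = -1 := by
    intro x hx
    have h1 : x ^ (q - 1) = 1 := by
      have := FiniteField.pow_card_sub_one_eq_one x hx
      rwa [← hq] at this
    have h2 : x ^ s * x ^ s = 1 := by
      rw [← pow_add]
      have hss : s + s = q - 1 := by omega
      rw [hss]; exact h1
    exact mul_self_eq_one_iff.mp h2
  have hsqk : ∀ k : ℕ, (-1 : F) ^ k * (-1 : F) ^ k = 1 := by
    intro k
    rw [← pow_add]
    exact Even.neg_one_pow ⟨k, rfl⟩
  -- generator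
  obtain ⟨ζ, hζ⟩ := IsCyclic.exists_generator (α := Fˣ)
  have hord : orderOf ζ = q - 1 := by
    rw [orderOf_eq_card_of_forall_mem_zpowers hζ, Nat.card_eq_fintype_card,
      Fintype.card_units, ← hq]
  have hζ0 : (ζ : F) ≠ 0 := Units.ne_zero ζ
  have hu : (ζ : F) ^ s = -1 := by
    have h1 := hchi (ζ : F) hζ0
    refine h1.resolve_left ?_
    intro h
    have h2 : ζ ^ s = 1 := by rw [← Units.val_eq_one]; push_cast; exact h
    have h3 := orderOf_dvd_of_pow_eq_one h2
    rw [hord] at h3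
    have := Nat.le_of_dvd (by omega) h3
    omega
  constructor
  · intro hinv
    have hf1 : f 1 = c + d := by rw [key]; simp
    have hA : (c * (c + d) ^ s + d) * (c + d) ^ r = 1 := by
      have h := hinv 1
      rwa [hf1, key (c + d)] at h
    -- condition 2
    have hcond2 : c * a ^ (s + r) + d * a ^ r = 1 := by
      rw [pow_add, ← hcd]
      linear_combination hA
    -- every nonzero square x satisfies x ^ (r*r) = x
    have hsq1 : ∀ x : F, x ^ s = 1 → x ^ (r * r) = x := by
      intro x hx1
      have e1 : f x = (c + d) * x ^ r := by rw [key, hx1]; ring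
      have e2 : f ((c + d) * x ^ r) =
          (c * (c + d) ^ s + d) * ((c + d) ^ r * x ^ (r * r)) := by
        rw [key, chis, hx1, one_pow, mul_one, mul_pow, ← pow_mul]
      have h := hinv x
      rw [e1, e2] at h
      calc x ^ (r * r) = ((c * (c + d) ^ s + d) * (c + d) ^ r) * x ^ (r * r) := by
            rw [hA, one_mul]
        _ = x := by rw [mul_assoc]; exact h
    -- condition 1
    have hzsq : ((ζ : F) ^ 2) ^ s = 1 := by
      rw [← pow_mul, ← hq1]
      have := FiniteField.pow_card_sub_one_eq_one (ζ : F) hζ0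
      rwa [← hq] at this
    have hcast : (ζ : F) ^ (2 * (r * r)) = (ζ : F) ^ 2 := by
      rw [pow_mul]; exact hsq1 _ hzsq
    have hu2 : ζ ^ (2 * (r * r)) = ζ ^ 2 := Units.ext (by exact_mod_cast hcast)
    have hmod : 2 * (r * r) ≡ 2 [MOD orderOf ζ] := pow_eq_pow_iff_modEq.mp hu2
    rw [hord, hq1] at hmod
    have hdvd2 : 2 * s ∣ 2 * (r * r) - 2 := (Nat.modEq_iff_dvd' (by omega)).mp hmod.symm
    have h6 : 2 * (r * r) - 2 = 2 * (r * r - 1) := by omega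
    rw [h6] at hdvd2
    have hst : s ∣ r ^ 2 - 1 := by
      rw [hpw]
      exact (Nat.mul_dvd_mul_iff_left (by norm_num : 0 < 2)).mp hdvd2
    have hcond1 : r ^ 2 ≡ 1 [MOD s] := ((Nat.modEq_iff_dvd' hr2).mpr hst).symm
    refine ⟨hcond1, hcond2, ?_⟩
    -- condition 3
    obtain ⟨k, hk⟩ := hst
    have hks : r * r = 1 + s * k := by omega
    have hexp : 2 * (r ^ 2 - 1) / (q - 1) = k := by
      rw [hq1, hk, ← mul_assoc]
      exact Nat.mul_div_cancel_left k (by omega)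
    have hfu : f (ζ : F) = b * (ζ : F) ^ r := by
      rw [key, hu]
      linear_combination (ζ : F) ^ r * hdc
    have e3 : f (b * (ζ : F) ^ r) =
        (c * (b ^ s * (-1) ^ r) + d) * (b ^ r * (ζ : F) ^ (r * r)) := by
      rw [key, chis, hu, mul_pow, ← pow_mul]
    have h := hinv (ζ : F)
    rw [hfu, e3] at h
    have hzr : (ζ : F) ^ (r * r) = (-1) ^ k * (ζ : F) := by
      rw [hks, pow_add, pow_one, pow_mul, hu]; ring
    rw [hzr] at h
    have h2 : (c * (b ^ s * (-1) ^ r) + d) * b ^ r * (-1 : F) ^ k = 1 := by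
      apply mul_right_cancel₀ hζ0
      rw [one_mul]
      linear_combination h
    rw [hexp, pow_add]
    linear_combination ((-1 : F) ^ k) * h2 -
      ((c * (b ^ s * (-1) ^ r) + d) * b ^ r) * hsqk k
  · rintro ⟨h1, h2, h3⟩
    intro x
    have hst : s ∣ r ^ 2 - 1 := (Nat.modEq_iff_dvd' hr2).mp h1.symm
    obtain ⟨k, hk⟩ := hst
    have hks : r * r = 1 + s * k := by omega
    have hexp : 2 * (r ^ 2 - 1) / (q - 1) = k := by
      rw [hq1, hk, ← mul_assoc]
      exact Nat.mul_div_cancel_left k (by omega)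
    rw [hexp] at h3
    rcases eq_or_ne x 0 with rfl | hx
    · have h0 : f 0 = 0 := by rw [key, zero_pow hr.ne', mul_zero]
      rw [h0, h0]
    · have hxk : x ^ (r * r) = x * (x ^ s) ^ k := by
        rw [hks, pow_add, pow_one, pow_mul]
      rcases hchi x hx with hη | hη
      · -- x is a nonzero square
        have h2' : (c * (c + d) ^ s + d) * (c + d) ^ r = 1 := by
          rw [hcd]
          rw [pow_add] at h2
          linear_combination h2
        have e1 : f x = (c + d) * x ^ r := by rw [key, hη]; ring
        have e2 : f ((c + d) * x ^ r) =
            (c * (c + d) ^ s + d) * ((c + d) ^ r * x ^ (r * r)) := by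
          rw [key, chis, hη, one_pow, mul_one, mul_pow, ← pow_mul]
        calc f (f x) = (c * (c + d) ^ s + d) * ((c + d) ^ r * x ^ (r * r)) := by
              rw [e1, e2]
          _ = ((c * (c + d) ^ s + d) * (c + d) ^ r) * (x * (x ^ s) ^ k) := by
              rw [hxk]; ring
          _ = x := by rw [h2', hη, one_pow, one_mul, mul_one]
      · -- x is a nonsquare
        have h3' : (c * (b ^ s * (-1) ^ r) + d) * b ^ r = (-1 : F) ^ k := by
          rw [pow_add] at h3
          linear_combination h3
        have e1 : f x = b * x ^ r := by
          rw [key, hη]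
          linear_combination x ^ r * hdc
        have e2 : f (b * x ^ r) =
            (c * (b ^ s * (-1) ^ r) + d) * (b ^ r * x ^ (r * r)) := by
          rw [key, chis, hη, mul_pow, ← pow_mul]
        calc f (f x) = (c * (b ^ s * (-1) ^ r) + d) * (b ^ r * x ^ (r * r)) := by
              rw [e1, e2]
          _ = ((c * (b ^ s * (-1) ^ r) + d) * b ^ r) * (x * (x ^ s) ^ k) := by
              rw [hxk]; ring
          _ = (-1 : F) ^ k * (x * (-1 : F) ^ k) := by rw [h3', hη]
          _ = x := by linear_combination x * hsqk k
end

section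
/- Let q = 2^(2k) for a positive integer k, α a primitive element of F_q, ω = α^((q-1)/3) a primitive cube root of unity, and β = α^(3ℓ+1) for any ℓ ∈ {0,1,...,(q-4)/3}. Set h₂ = 1 + ωβ + ω²β⁻¹, h₁ = 1 + ω²β + ωβ⁻¹, h₀ = 1 + β + β⁻¹. Then f(x) = h₂·x^((2q+1)/3) + h₁·x^((q+2)/3) + h₀·x is an involution on F_q. -/
theorem stmt_5 (F : Type*) [Field F] [Fintype F]
    (k : ℕ) (hk : 0 < k) (hcard : Fintype.card F = 2 ^ (2 * k))
    (α : F) (hα : orderOf α = Fintype.card F - 1)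
    (ω : F) (hω : ω = α ^ ((Fintype.card F - 1) / 3))
    (ℓ : ℕ) (hℓ : ℓ ≤ (Fintype.card F - 4) / 3)
    (β : F) (hβ : β = α ^ (3 * ℓ + 1))
    (h₂ h₁ h₀ : F)
    (hh₂ : h₂ = 1 + ω * β + ω ^ 2 * β⁻¹)
    (hh₁ : h₁ = 1 + ω ^ 2 * β + ω * β⁻¹)
    (hh₀ : h₀ = 1 + β + β⁻¹)
    (f : F → F)
    (hf : ∀ x, f x = h₂ * x ^ ((2 * Fintype.card F + 1) / 3) +
        h₁ * x ^ ((Fintype.card F + 2) / 3) + h₀ * x) :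
    ∀ x : F, f (f x) = x := by
  set q := Fintype.card F with hq
  -- basic numerics
  have hq4 : 4 ≤ q := by
    rw [hcard]
    calc (4:ℕ) = 2 ^ (2*1) := by norm_num
    _ ≤ 2 ^ (2*k) := Nat.pow_le_pow_right (by norm_num) (by omega)
  have h3dvd : 3 ∣ q - 1 := by
    rw [hcard, pow_mul]
    have : (4 - 1) ∣ 4 ^ k - 1 ^ k := Nat.sub_dvd_pow_sub_pow 4 1 k
    simpa using this
  set t := (q - 1) / 3 with htdef
  have ht3 : 3 * t = q - 1 := Nat.mul_div_cancel' h3dvd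
  have hqt : q = 3 * t + 1 := by omega
  have ht1 : 1 ≤ t := by omega
  have e1 : (2 * q + 1) / 3 = 2 * t + 1 := by omega
  have e2 : (q + 2) / 3 = t + 1 := by omega
  -- characteristic 2
  have h2 : (2 : F) = 0 := by
    have hc := FiniteField.cast_card_eq_zero F
    rw [← hq, hcard] at hc
    push_cast at hc
    exact pow_eq_zero_iff (by omega) |>.mp hc
  -- alpha nonzero
  have hα1 : α ^ (q - 1) = 1 := by rw [← hα]; exact pow_orderOf_eq_one α
  have hαne : α ≠ 0 := by
    intro h
    rw [h, zero_pow (by omega)] at hα1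
    exact zero_ne_one hα1
  have hβne : β ≠ 0 := by rw [hβ]; exact pow_ne_zero _ hαne
  have hβinv : β * β⁻¹ = 1 := mul_inv_cancel₀ hβne
  -- omega facts
  have hω3 : ω ^ 3 = 1 := by
    rw [hω, ← pow_mul, mul_comm, ht3, hα1]
  have hωne : ω ≠ 1 := by
    intro h
    rw [hω] at h
    have hd := orderOf_dvd_of_pow_eq_one h
    rw [hα] at hd
    have := Nat.le_of_dvd (by omega) hd
    omega
  have hωs : ω ^ 2 + ω + 1 = 0 := by
    have hfac : (ω - 1) * (ω ^ 2 + ω + 1) = 0 := by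
      linear_combination hω3
    rcases mul_eq_zero.mp hfac with h | h
    · exact absurd (sub_eq_zero.mp h) hωne
    · exact h
  -- β^t = ω, (β⁻¹)^t = ω²
  have hβt : β ^ t = ω := by
    rw [hβ, ← pow_mul, hω]
    have : (3 * ℓ + 1) * t = (q - 1) * ℓ + t := by rw [← ht3]; ring
    rw [this, pow_add, pow_mul, hα1, one_pow, one_mul]
  have hβit : (β⁻¹) ^ t = ω ^ 2 := by
    rw [inv_pow, hβt]
    refine inv_eq_of_mul_eq_one_left ?_
    linear_combination hω3
  -- generic computation of f
  have key : ∀ y c : F, y ^ t = c →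
      f y = (h₂ * c ^ 2 + h₁ * c + h₀) * y := by
    intro y c hc
    rw [hf y, e1, e2]
    have hy1 : y ^ (2 * t + 1) = c ^ 2 * y := by
      rw [pow_succ, two_mul, pow_add, hc]; ring
    have hy2 : y ^ (t + 1) = c * y := by rw [pow_succ, hc]
    rw [hy1, hy2]; ring
  have F1 : ∀ y : F, y ^ t = 1 → f y = y := by
    intro y hc
    rw [key y 1 hc, hh₂, hh₁, hh₀]
    linear_combination (β + β⁻¹) * y * hωs + y * h2
  have Fω : ∀ y : F, y ^ t = ω → f y = β * y := by
    intro y hc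
    rw [key y ω hc, hh₂, hh₁, hh₀]
    linear_combination (1 + β⁻¹ * (ω ^ 2 - ω + 1)) * y * hωs + ω ^ 3 * β * y * h2
  have Fω2 : ∀ y : F, y ^ t = ω ^ 2 → f y = β⁻¹ * y := by
    intro y hc
    rw [key y (ω ^ 2) hc, hh₂, hh₁, hh₀]
    linear_combination
      (ω ^ 2 - ω + 1 + β * (ω ^ 3 - ω + 1) + β⁻¹ * ω ^ 3 * (ω - 1)) * y * hωs +
      ω ^ 3 * β⁻¹ * y * h2
  intro x
  by_cases hx : x = 0
  · have hf0 : f 0 = 0 := by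
      rw [hf 0, e1, e2, zero_pow (by omega), zero_pow (by omega)]
      ring
    rw [hx, hf0, hf0]
  · have hc3 : (x ^ t) ^ 3 = 1 := by
      rw [← pow_mul, mul_comm, ht3, FiniteField.pow_card_sub_one_eq_one x hx]
    have hcases : x ^ t = 1 ∨ x ^ t = ω ∨ x ^ t = ω ^ 2 := by
      have hfac : (x ^ t - 1) * ((x ^ t - ω) * (x ^ t - ω ^ 2)) = 0 := by
        linear_combination hc3 + (x ^ t - (x ^ t) ^ 2) * hωs + (x ^ t - 1) * hω3
      rcases mul_eq_zero.mp hfac with h | h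
      · exact Or.inl (sub_eq_zero.mp h)
      · rcases mul_eq_zero.mp h with h | h
        · exact Or.inr (Or.inl (sub_eq_zero.mp h))
        · exact Or.inr (Or.inr (sub_eq_zero.mp h))
    rcases hcases with h | h | h
    · rw [F1 x h, F1 x h]
    · rw [Fω x h]
      have hb : (β * x) ^ t = ω ^ 2 := by rw [mul_pow, hβt, h]; ring
      rw [Fω2 _ hb, ← mul_assoc, inv_mul_cancel₀ hβne, one_mul]
    · rw [Fω2 x h]
      have hb : (β⁻¹ * x) ^ t = ω := by
        rw [mul_pow, hβit, h, ← pow_add]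
        calc ω ^ (2 + 2) = ω ^ 3 * ω := by ring
        _ = ω := by rw [hω3, one_mul]
      rw [Fω _ hb, ← mul_assoc, hβinv, one_mul]
end

section
/- Let q = 2^(2k) for a positive integer k, α a primitive element of F_q, and u, v ∈ {0,1,...,(q-4)/3}. Set h₂ = α^(3u) and h₀ = α^(3u) + α^(3(v+1)). Then f(x) = h₂·x^(q-2) + h₀·(x^((2q-5)/3) + x^((q-4)/3)) is an involution on F_{2^(2k)}. -/
/-!
Write `q = 3(m + 1) + 1` and `t = x ^ (m + 1)` for `x ≠ 0`, so that `t ^ 3 = 1`. Then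
`f x * x = h₂ t³ + h₀ (t² + t)` is `h₂` if `t = 1` and `h₂ + h₀` otherwise, since in characteristic 2
a primitive cube root of unity satisfies `t² + t = 1`. Both constants are cubes, hence `(m + 1)`-th
roots of unity, so `f x = c / x` with `(f x) ^ (m + 1) = t⁻¹`. Thus `f x` falls in the same case
as `x`, and `f (f x) = c / (c / x) = x`.
-/

theorem CharTwo.sq_add_self_eq_one {R : Type*} [CommRing R] [IsDomain R] [CharP R 2] {t : R}
    (h3 : t ^ 3 = 1) (h1 : t ≠ 1) : t ^ 2 + t = 1 := by
  have hfactor : (t - 1) * (t ^ 2 + t + 1) = 0 := by linear_combination h3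
  have hsum := (mul_eq_zero.mp hfactor).resolve_left (sub_ne_zero.mpr h1)
  rw [← CharTwo.neg_eq (1 : R)]
  linear_combination hsum

theorem charP_two_of_card_eq_two_pow {F : Type*} [Field F] [Fintype F] {n : ℕ}
    (hcard : Fintype.card F = 2 ^ n) : CharP F 2 := by
  have h := FiniteField.cast_card_eq_zero F
  rw [hcard, Nat.cast_pow, Nat.cast_ofNat] at h
  exact CharTwo.of_one_ne_zero_of_two_eq_zero one_ne_zero (eq_zero_of_pow_eq_zero h)

theorem two_pow_two_mul_eq_three_mul_add_one {k : ℕ} (h : 1 < 2 ^ (2 * k)) :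
    2 ^ (2 * k) = 3 * ((2 ^ (2 * k) - 4) / 3 + 1) + 1 := by
  have hk : k ≠ 0 := by rintro rfl; simp at h
  have hmod : 2 ^ (2 * k) % 3 = 1 := by rw [pow_mul, Nat.pow_mod]; norm_num
  have hge : 4 ≤ 2 ^ (2 * k) :=
    calc 4 = 2 ^ 2 := by norm_num
      _ ≤ 2 ^ (2 * k) := Nat.pow_le_pow_right (by norm_num) (by omega)
  omega

theorem pow_three_mul_pow_eq_one {M : Type*} [CommMonoid M] {α : M} {n : ℕ}
    (hα : α ^ (3 * n) = 1) (u : ℕ) : (α ^ (3 * u)) ^ n = 1 := by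
  rw [← pow_mul, mul_right_comm, pow_mul, hα, one_pow]

theorem pow_succ_pow_three_eq_one {F : Type*} [Field F] [Fintype F] {m : ℕ}
    (hcard : Fintype.card F = 3 * (m + 1) + 1) {x : F} (hx : x ≠ 0) : (x ^ (m + 1)) ^ 3 = 1 := by
  rw [← pow_mul, mul_comm, ← FiniteField.pow_card_sub_one_eq_one x hx, hcard, Nat.add_sub_cancel]

def trinomialMap {F : Type*} [Field F] (m : ℕ) (a b : F) (x : F) : F :=
  a * x ^ (3 * m + 2) + b * (x ^ (2 * m + 1) + x ^ m)

theorem trinomialMap_zero {F : Type*} [Field F] {m : ℕ} {a b : F} (ha : a ^ (m + 1) = 1)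
    (hab : (a + b) ^ (m + 1) = 1) : trinomialMap m a b 0 = 0 := by
  rcases Nat.eq_zero_or_pos m with rfl | hm
  -- `x ^ 0 = 1` makes `trinomialMap 0 a b 0 = b`; here the hypotheses force `a = 1`, `b = 0`.
  · have hb : b = 0 := by
      rw [zero_add, pow_one] at ha hab
      rw [ha] at hab
      exact left_eq_add.mp hab.symm
    simp [trinomialMap, hb]
  · simp [trinomialMap, zero_pow hm.ne']

section TrinomialInvolution

variable {F : Type*} [Field F] [Fintype F] [CharP F 2] {m : ℕ}

theorem trinomialMap_mul_self [DecidableEq F] (hcard : Fintype.card F = 3 * (m + 1) + 1)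
    (a b : F) {x : F} (hx : x ≠ 0) :
    trinomialMap m a b x * x = if x ^ (m + 1) = 1 then a else a + b := by
  have hcube := pow_succ_pow_three_eq_one hcard hx
  have hexpand : trinomialMap m a b x * x =
      a * (x ^ (m + 1)) ^ 3 + b * ((x ^ (m + 1)) ^ 2 + x ^ (m + 1)) := by
    unfold trinomialMap; ring
  rw [hexpand, hcube]
  split_ifs with ht
  · rw [ht, one_pow, CharTwo.add_self_eq_zero, mul_zero, mul_one, add_zero]
  · rw [CharTwo.sq_add_self_eq_one hcube ht, mul_one, mul_one]

theorem trinomialMap_involutive (hcard : Fintype.card F = 3 * (m + 1) + 1) {a b : F}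
    (ha : a ^ (m + 1) = 1) (hab : (a + b) ^ (m + 1) = 1) :
    Function.Involutive (trinomialMap m a b) := by
  classical
  intro x
  rcases eq_or_ne x 0 with rfl | hx
  · rw [trinomialMap_zero ha hab, trinomialMap_zero ha hab]
  set c := if x ^ (m + 1) = 1 then a else a + b with hc
  have hc1 : c ^ (m + 1) = 1 := by rw [hc]; split_ifs <;> assumption
  have hc0 : c ≠ 0 := by
    rintro h
    rw [h, zero_pow m.succ_ne_zero] at hc1
    exact zero_ne_one hc1
  have hfx : trinomialMap m a b x = c / x :=
    eq_div_of_mul_eq hx (trinomialMap_mul_self hcard a b hx)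
  have hfx0 : trinomialMap m a b x ≠ 0 := by rw [hfx]; exact div_ne_zero hc0 hx
  have hpow : trinomialMap m a b x ^ (m + 1) = (x ^ (m + 1))⁻¹ := by
    rw [hfx, div_pow, hc1, one_div]
  have hcase : (trinomialMap m a b x ^ (m + 1) = 1) ↔ x ^ (m + 1) = 1 := by
    rw [hpow, inv_eq_one]
  rw [eq_div_of_mul_eq hfx0 (trinomialMap_mul_self hcard a b hfx0), if_congr hcase rfl rfl, ← hc,
    hfx, div_div_cancel₀ hc0]

end TrinomialInvolution

theorem stmt_6_general (F : Type*) [Field F] [Fintype F]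
    (k : ℕ) (hcard : Fintype.card F = 2 ^ (2 * k))
    (α : F) (hα : orderOf α = Fintype.card F - 1)
    (u v : ℕ)
    (h₂ h₀ : F)
    (hh₂ : h₂ = α ^ (3 * u))
    (hh₀ : h₀ = α ^ (3 * u) + α ^ (3 * (v + 1)))
    (f : F → F)
    (hf : ∀ x, f x = h₂ * x ^ (Fintype.card F - 2) +
        h₀ * (x ^ ((2 * Fintype.card F - 5) / 3) + x ^ ((Fintype.card F - 4) / 3))) :
    ∀ x : F, f (f x) = x := by
  have := charP_two_of_card_eq_two_pow hcard
  set m := (Fintype.card F - 4) / 3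
  have hq : Fintype.card F = 3 * (m + 1) + 1 := by
    have := two_pow_two_mul_eq_three_mul_add_one (hcard ▸ Fintype.one_lt_card)
    rwa [← hcard] at this
  have hfm : f = trinomialMap m h₂ h₀ := by
    funext x
    rw [hf, trinomialMap, show Fintype.card F - 2 = 3 * m + 2 by omega,
      show (2 * Fintype.card F - 5) / 3 = 2 * m + 1 by omega]
  have hαq : α ^ (3 * (m + 1)) = 1 := by
    have := hα ▸ pow_orderOf_eq_one α
    rwa [hq, Nat.add_sub_cancel] at this
  have hsum : h₂ + h₀ = α ^ (3 * (v + 1)) := by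
    rw [hh₂, hh₀, ← add_assoc, CharTwo.add_self_eq_zero, zero_add]
  rw [hfm]
  exact trinomialMap_involutive hq (hh₂ ▸ pow_three_mul_pow_eq_one hαq u)
    (hsum ▸ pow_three_mul_pow_eq_one hαq (v + 1))

theorem stmt_6 (F : Type*) [Field F] [Fintype F]
    (k : ℕ) (hk : 0 < k) (hcard : Fintype.card F = 2 ^ (2 * k))
    (α : F) (hα : orderOf α = Fintype.card F - 1)
    (u v : ℕ) (hu : u ≤ (Fintype.card F - 4) / 3) (hv : v ≤ (Fintype.card F - 4) / 3)
    (h₂ h₀ : F)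
    (hh₂ : h₂ = α ^ (3 * u))
    (hh₀ : h₀ = α ^ (3 * u) + α ^ (3 * (v + 1)))
    (f : F → F)
    (hf : ∀ x, f x = h₂ * x ^ (Fintype.card F - 2) +
        h₀ * (x ^ ((2 * Fintype.card F - 5) / 3) + x ^ ((Fintype.card F - 4) / 3))) :
    ∀ x : F, f (f x) = x :=
  stmt_6_general F k hcard α hα u v h₂ h₀ hh₂ hh₀ f hf
end

section
/- Let q be a prime power and r an integer with r ≡ -1 (mod q-1). Let h ∈ F_{q²}[x] be such that for every β in the group μ_{q+1} of (q+1)-st roots of unity in F_{q²}*, one has β^((r²-1)/(q-1))·h(β^r) = h(β), h(β) ∈ F_q, and h(β) ≠ 0. Then f(x) = x^r·h(x^(q-1)) is an involution on F_{q²}. -/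
theorem stmt_7 (F K : Type*) [Field F] [Fintype F] [Field K] [Fintype K] [Algebra F K]
    (q : ℕ) (hq : Fintype.card F = q) (hK : Fintype.card K = q ^ 2)
    (r : ℕ) (hr : 0 < r) (hrmod : (q - 1) ∣ (r + 1))
    (h : Polynomial K)
    (hcond : ∀ β : K, β ^ (q + 1) = 1 →
      β ^ ((r ^ 2 - 1) / (q - 1)) * h.eval (β ^ r) = h.eval β ∧
      h.eval β ∈ Set.range (algebraMap F K) ∧ h.eval β ≠ 0)
    (f : K → K) (hf : ∀ x, f x = x ^ r * h.eval (x ^ (q - 1))) :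
    ∀ x : K, f (f x) = x := by
  have hq2 : 1 < q := hq ▸ Fintype.one_lt_card
  intro x
  rcases eq_or_ne x 0 with rfl | hx
  · have h0 : f 0 = 0 := by
      rw [hf, zero_pow hr.ne', zero_mul]
    rw [h0, h0]
  · set β := x ^ (q - 1) with hβdef
    have hxcard : x ^ (q ^ 2 - 1) = 1 := by
      have := FiniteField.pow_card_sub_one_eq_one x hx
      rwa [hK] at this
    have hβ : β ^ (q + 1) = 1 := by
      rw [hβdef, ← pow_mul]
      have : (q - 1) * (q + 1) = q ^ 2 - 1 := by
        have := Nat.sq_sub_sq q 1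
        simp at this
        rw [this]; ring
      rw [this, hxcard]
    obtain ⟨heq, ⟨a, ha⟩, hne⟩ := hcond β hβ
    have ha0 : a ≠ 0 := by
      rintro rfl; simp at ha; exact hne ha.symm
    have haK1 : h.eval β ^ (q - 1) = 1 := by
      have := FiniteField.pow_card_sub_one_eq_one a ha0
      rw [hq] at this
      rw [← ha, ← map_pow, this, map_one]
    have hdvd : (q - 1) ∣ r ^ 2 - 1 := by
      refine hrmod.trans ⟨r - 1, ?_⟩
      have := Nat.sq_sub_sq r 1
      simpa using this
    have hr2pos : 1 ≤ r ^ 2 := Nat.one_le_pow _ _ hr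
    have hxr2 : x ^ (r ^ 2) = x * β ^ ((r ^ 2 - 1) / (q - 1)) := by
      rw [hβdef, ← pow_mul, Nat.mul_div_cancel' hdvd, ← pow_succ']
      congr 1
      omega
    have hfx : f x = x ^ r * h.eval β := hf x
    have hfxq : (f x) ^ (q - 1) = β ^ r := by
      rw [hfx, mul_pow, haK1, mul_one, hβdef, ← pow_mul, mul_comm r (q - 1), pow_mul]
    have key : f (f x) = x ^ (r ^ 2) * h.eval β ^ r * h.eval (β ^ r) := by
      rw [hf (f x), hfxq, hfx, mul_pow, ← pow_mul, ← pow_two]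
    rw [key, hxr2]
    have : x * β ^ ((r ^ 2 - 1) / (q - 1)) * h.eval β ^ r * h.eval (β ^ r)
        = x * (β ^ ((r ^ 2 - 1) / (q - 1)) * h.eval (β ^ r)) * h.eval β ^ r := by ring
    rw [this, heq, mul_assoc, ← pow_succ']
    have hpow1 : h.eval β ^ (r + 1) = 1 := by
      rw [← Nat.mul_div_cancel' hrmod, pow_mul, haK1, one_pow]
    rw [hpow1, mul_one]
end

section
/- Let q be an odd prime power, i an integer with 1 ≤ i ≤ q, and b ∈ F_{q²}*. Suppose either q ≡ 1 (mod 4) and b is a square in F_{q²}*, or q ≡ 3 (mod 4) and b is a non-square in F_{q²}*. Then f(x) = b·x^(q²+(i-1)q-1-i) + b^q·x^((1+i)q²-(1+i)q-1) is an involution on F_{q²}. -/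
theorem stmt_8 (K : Type*) [Field K] [Fintype K]
    (q : ℕ) (hqodd : Odd q) (hK : Fintype.card K = q ^ 2)
    (i : ℕ) (hi1 : 1 ≤ i) (hiq : i ≤ q)
    (b : K) (hb : b ≠ 0)
    (hcases : (q % 4 = 1 ∧ IsSquare b) ∨ (q % 4 = 3 ∧ ¬ IsSquare b))
    (f : K → K)
    (hf : ∀ x, f x = b * x ^ (q ^ 2 + (i - 1) * q - 1 - i) +
        b ^ q * x ^ ((1 + i) * q ^ 2 - (1 + i) * q - 1)) :
    ∀ x : K, f (f x) = x := by
  obtain ⟨m, hm⟩ := hqodd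
  -- basic facts
  have hcard1 : 1 < q ^ 2 := hK ▸ Fintype.one_lt_card
  have hq2 : 2 ≤ q := by nlinarith
  have hq3 : 3 ≤ q := by omega
  have hq2sq : q + 1 ≤ q ^ 2 := by nlinarith
  have h2qsq : 2 * q ≤ q ^ 2 := by nlinarith
  have hq1 : 1 ≤ q := by omega
  have h1sq : 1 ≤ q ^ 2 := by omega
  -- characteristic facts
  have hoddcard : Fintype.card K % 2 = 1 := by
    rw [hK]; rw [hm]; have : (2*m+1)^2 = (2*m*m+2*m)*2+1 := by ring
    rw [this]; omega
  have hchar : ringChar K ≠ 2 := by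
    intro h
    have := FiniteField.even_card_iff_char_two.mp h
    omega
  have hneg1 : (-1 : K) ≠ 1 := Ring.neg_one_ne_one_of_char_ne_two hchar
  have hxq2 : ∀ y : K, y ≠ 0 → y ^ (q ^ 2 - 1) = 1 := fun y hy => by
    rw [← hK]; exact FiniteField.pow_card_sub_one_eq_one y hy
  have hpowcard : ∀ a : K, a ^ (q ^ 2) = a := fun a => by
    rw [← hK]; exact FiniteField.pow_card a
  -- Frobenius additivity for q
  have hfrob : ∀ a c : K, (a + c) ^ q = a ^ q + c ^ q := by
    set p := ringChar K with hp_def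
    haveI : CharP K p := ringChar.charP K
    obtain ⟨n, hp, hcard⟩ := FiniteField.card K p
    haveI := Fact.mk hp
    have hqdvd : q ∣ p ^ (n : ℕ) := by
      rw [← hcard, hK]; exact dvd_pow_self q two_ne_zero
    obtain ⟨k, hkn, hqk⟩ := (Nat.dvd_prime_pow hp).mp hqdvd
    intro a c
    rw [hqk]
    exact add_pow_char_pow a c p k
  -- arithmetic identities
  have hA1 : q ^ 2 + (i - 1) * q - 1 - i = q ^ 2 - q - 1 + (q - 1) * i := by
    rw [Nat.sub_sub (q ^ 2 + (i - 1) * q) 1 i, Nat.sub_sub (q ^ 2) q 1]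
    have h1 : 1 + i ≤ q ^ 2 := le_trans (by omega) hq2sq
    have h1' : 1 + i ≤ q ^ 2 + (i - 1) * q := le_trans h1 (Nat.le_add_right _ _)
    zify [h1', hq2sq, hi1, hq1]
    ring
  have hA2 : (1 + i) * q ^ 2 - (1 + i) * q - 1 = q ^ 2 - q - 1 + (q - 1) * i * q := by
    rw [Nat.sub_sub ((1 + i) * q ^ 2) ((1 + i) * q) 1, Nat.sub_sub (q ^ 2) q 1]
    have h2 : (1 + i) * q + 1 ≤ (1 + i) * q ^ 2 := by nlinarith
    zify [h2, hq2sq, hq1]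
    ring
  have hA3 : (q ^ 2 - q - 1) * (q - 1) = q - 1 + (q ^ 2 - 1) * (q - 2) := by
    rw [Nat.sub_sub (q ^ 2) q 1]
    zify [hq2sq, h1sq, hq1, hq2]
    ring
  have hA4 : (q ^ 2 - q - 1) * (q ^ 2 - q - 1) = 1 + (q ^ 2 - 1) * (q ^ 2 - 2 * q) := by
    rw [Nat.sub_sub (q ^ 2) q 1]
    zify [hq2sq, h1sq, h2qsq]
    ring
  have hA5 : (q - 1) * i = m * i + m * i := by
    rw [hm]
    have : 2 * m + 1 - 1 = 2 * m := by omega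
    rw [this]; ring
  have hA6 : q ^ 2 / 2 = (q - 1) * (m + 1) := by
    rw [hm]
    have h : (2 * m + 1) ^ 2 = (m * (m + 1)) * 4 + 1 := by ring
    have h2 : 2 * m + 1 - 1 = 2 * m := by omega
    have h3 : 2 * m * (m + 1) = 2 * (m * (m + 1)) := by ring
    rw [h, h2, h3]
    generalize m * (m + 1) = G
    omega
  have hA7 : q ^ 2 - 1 = 2 * ((q - 1) * (m + 1)) := by
    rw [hm]
    have h : (2 * m + 1) ^ 2 = (m * (m + 1)) * 4 + 1 := by ring
    have h2 : 2 * m + 1 - 1 = 2 * m := by omega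
    have h3 : 2 * (2 * m * (m + 1)) = 4 * (m * (m + 1)) := by ring
    rw [h, h2, h3]
    generalize m * (m + 1) = G
    omega
  have hA8 : q ^ 2 - q - 1 + 1 = (q - 1) * q := by
    rw [Nat.sub_sub (q ^ 2) q 1]
    zify [hq2sq, hq1]
    ring
  -- the standard form of f
  have hform : ∀ y : K, f y = y ^ (q ^ 2 - q - 1) *
      (b * y ^ ((q - 1) * i) + (b * y ^ ((q - 1) * i)) ^ q) := by
    intro y
    rw [hf, mul_add]
    congr 1
    · rw [hA1, pow_add]; ring
    · rw [hA2, pow_add, mul_pow, ← pow_mul]; ring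
  intro x
  rcases eq_or_ne x 0 with rfl | hx
  · -- x = 0
    have hpos1 : 0 < (q - 1) * i := Nat.mul_pos (by omega) hi1
    have he1 : q ^ 2 + (i - 1) * q - 1 - i ≠ 0 := by
      rw [hA1]
      exact (Nat.lt_of_lt_of_le hpos1 (Nat.le_add_left _ _)).ne'
    have he2 : (1 + i) * q ^ 2 - (1 + i) * q - 1 ≠ 0 := by
      rw [hA2]
      have : 0 < (q - 1) * i * q := Nat.mul_pos hpos1 (by omega)
      exact (Nat.lt_of_lt_of_le this (Nat.le_add_left _ _)).ne'
    have h0 : f 0 = 0 := by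
      rw [hf]; rw [zero_pow he1, zero_pow he2]; ring
    rw [h0, h0]
  · -- x ≠ 0
    have hxs : x ^ ((q - 1) * i) ≠ 0 := pow_ne_zero _ hx
    have hu : b * x ^ ((q - 1) * i) ≠ 0 := mul_ne_zero hb hxs
    have hxsq : IsSquare (x ^ ((q - 1) * i)) := by
      refine ⟨x ^ (m * i), ?_⟩
      rw [← pow_add, hA5]
    -- key nonvanishing
    have ht : b * x ^ ((q - 1) * i) + (b * x ^ ((q - 1) * i)) ^ q ≠ 0 := by
      intro hcontra
      have hu1 : (b * x ^ ((q - 1) * i)) ^ (q - 1) = -1 := by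
        apply mul_right_cancel₀ hu
        rw [← pow_succ, show q - 1 + 1 = q by omega, neg_one_mul]
        exact eq_neg_of_add_eq_zero_right hcontra
      rcases hcases with ⟨hq4, hbsq⟩ | ⟨hq4, hbns⟩
      · have husq : IsSquare (b * x ^ ((q - 1) * i)) := hbsq.mul hxsq
        obtain ⟨c, hc⟩ := husq
        have hc0 : c ≠ 0 := fun h => hu (by rw [hc, h, mul_zero])
        have hmodd : Odd (m + 1) := by
          rw [Nat.odd_iff]; omega
        have hbad : (1 : K) = -1 := by
          calc (1 : K) = c ^ (q ^ 2 - 1) := (hxq2 c hc0).symm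
            _ = ((c * c) ^ (q - 1)) ^ (m + 1) := by
                rw [← sq, ← pow_mul, ← pow_mul, hA7]
            _ = ((b * x ^ ((q - 1) * i)) ^ (q - 1)) ^ (m + 1) := by rw [← hc]
            _ = ((-1 : K)) ^ (m + 1) := by rw [hu1]
            _ = -1 := hmodd.neg_one_pow
        exact hneg1 hbad.symm
      · have huns : ¬ IsSquare (b * x ^ ((q - 1) * i)) := by
          intro hus
          apply hbns
          have hb' : b = b * x ^ ((q - 1) * i) * (x ^ ((q - 1) * i))⁻¹ := by
            rw [mul_assoc, mul_inv_cancel₀ hxs, mul_one]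
          rw [hb']
          exact hus.mul hxsq.inv
        have hne1 : (b * x ^ ((q - 1) * i)) ^ (Fintype.card K / 2) ≠ 1 := fun h =>
          huns ((FiniteField.isSquare_iff hchar hu).mpr h)
        have hneg : (b * x ^ ((q - 1) * i)) ^ (Fintype.card K / 2) = -1 :=
          (FiniteField.pow_dichotomy hchar hu).resolve_left hne1
        have hcard2 : Fintype.card K / 2 = (q - 1) * (m + 1) := by rw [hK]; exact hA6
        rw [hcard2, pow_mul, hu1] at hneg
        have hmeven : Even (m + 1) := by
          rw [Nat.even_iff]; omega
        rw [hmeven.neg_one_pow] at hneg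
        exact hneg1 hneg.symm
    obtain ⟨t, htdef⟩ : ∃ t : K, b * x ^ ((q - 1) * i) + (b * x ^ ((q - 1) * i)) ^ q = t :=
      ⟨_, rfl⟩
    rw [htdef] at ht
    have hxq1 : x ^ (q ^ 2 - 1) = 1 := hxq2 x hx
    have htq : t ^ q = t := by
      rw [← htdef, hfrob, ← pow_mul, show q * q = q ^ 2 by ring, hpowcard, add_comm]
    have htq1 : t ^ (q - 1) = 1 := by
      apply mul_right_cancel₀ ht
      rw [one_mul, ← pow_succ, show q - 1 + 1 = q by omega, htq]
    have hfx : f x = x ^ (q ^ 2 - q - 1) * t := by rw [hform x, htdef]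
    have hfxpow : (f x) ^ (q - 1) = x ^ (q - 1) := by
      rw [hfx, mul_pow, htq1, mul_one, ← pow_mul, hA3, pow_add, pow_mul, hxq1, one_pow,
        mul_one]
    have hfxi : (f x) ^ ((q - 1) * i) = x ^ ((q - 1) * i) := by
      rw [pow_mul, hfxpow, ← pow_mul]
    have htfin : t ^ (q ^ 2 - q - 1) * t = 1 := by
      rw [← pow_succ, show q ^ 2 - q - 1 + 1 = (q - 1) * q from hA8, pow_mul, htq1, one_pow]
    rw [hform (f x), hfxi, htdef, hfx, mul_pow, ← pow_mul, hA4, pow_add, pow_mul, hxq1,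
      one_pow, mul_one, pow_one, mul_assoc, htfin, mul_one]
end

section
/- Let q be a prime power, m and d integers with d dividing gcd(q-1, m), s = (q^m - 1)/d, and r an integer with r ≡ -1 (mod s). Let e be the residue of (r²-1)/s modulo d with 0 ≤ e ≤ d-1. Let h(x) = Σ_{i=0}^{d-1} h_i x^i ∈ F_q[x] with coefficients satisfying h_{e-i} = h_i for 0 ≤ i ≤ e and h_{d+e-i} = h_i for e+1 ≤ i ≤ d-1. If h has no root in the group μ_d of d-th roots of unity in F_{q^m}*, then f(x) = x^r·h(x^s) is an involution on F_{q^m}. -/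
theorem stmt_9 (F K : Type*) [Field F] [Fintype F] [Field K] [Fintype K] [Algebra F K]
    (q m d s r e : ℕ) (hq : Fintype.card F = q) (hK : Fintype.card K = q ^ m)
    (hm : 0 < m) (hdpos : 0 < d) (hd : d ∣ Nat.gcd (q - 1) m)
    (hs : s = (q ^ m - 1) / d)
    (hr : 0 < r) (hrmod : s ∣ (r + 1))
    (he : e ≤ d - 1) (hemod : (r ^ 2 - 1) / s ≡ e [MOD d])
    (h : Polynomial F) (hdeg : h.natDegree < d)
    (hsym1 : ∀ i ≤ e, h.coeff (e - i) = h.coeff i)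
    (hsym2 : ∀ i, e + 1 ≤ i → i ≤ d - 1 → h.coeff (d + e - i) = h.coeff i)
    (hroot : ∀ β : K, β ^ d = 1 → (h.map (algebraMap F K)).eval β ≠ 0)
    (f : K → K)
    (hf : ∀ x, f x = x ^ r * (h.map (algebraMap F K)).eval (x ^ s)) :
    ∀ x : K, f (f x) = x := by
  haveI : NeZero d := ⟨by omega⟩
  set φ := algebraMap F K with hφdef
  have hq2 : 2 ≤ q := hq ▸ Fintype.one_lt_card
  have hdq : d ∣ q - 1 := hd.trans (Nat.gcd_dvd_left _ _)
  have hdm : d ∣ m := hd.trans (Nat.gcd_dvd_right _ _)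
  have hqm1 : 1 ≤ q ^ m := Nat.one_le_pow _ _ (by omega)
  -- geometric sum facts
  have hT : (q - 1) * (∑ i ∈ Finset.range m, q ^ i) = q ^ m - 1 := by
    have h1 : (((q - 1) * (∑ i ∈ Finset.range m, q ^ i) : ℕ) : ℤ)
        = ((q ^ m - 1 : ℕ) : ℤ) := by
      push_cast [Nat.cast_sub (show 1 ≤ q by omega), Nat.cast_sub hqm1]
      rw [mul_comm]
      exact geom_sum_mul _ _
    exact_mod_cast h1
  have hdT : d ∣ ∑ i ∈ Finset.range m, q ^ i := by
    have h0 : ((q - 1 : ℕ) : ZMod d) = 0 :=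
      (ZMod.natCast_eq_zero_iff _ _).2 hdq
    have hq1 : ((q : ℕ) : ZMod d) = 1 := by
      have h2 : ((q : ℕ) : ZMod d) = ((q - 1 : ℕ) : ZMod d) + 1 := by
        rw [← Nat.cast_one (R := ZMod d), ← Nat.cast_add]
        congr 1
        omega
      rw [h2, h0, zero_add]
    have h3 : ((∑ i ∈ Finset.range m, q ^ i : ℕ) : ZMod d) = 0 := by
      push_cast
      simp only [hq1, one_pow, Finset.sum_const, Finset.card_range, nsmul_eq_mul, smul_eq_mul, mul_one]
      exact (ZMod.natCast_eq_zero_iff _ _).2 hdm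
    exact (ZMod.natCast_eq_zero_iff _ _).1 h3
  have hdqm : d ∣ q ^ m - 1 := by
    rw [← hT]
    exact Dvd.dvd.mul_right hdq _
  have hsd : s * d = q ^ m - 1 := by rw [hs]; exact Nat.div_mul_cancel hdqm
  have hq1s : (q - 1) ∣ s := by
    refine ⟨(∑ i ∈ Finset.range m, q ^ i) / d, ?_⟩
    rw [hs, ← hT, Nat.mul_div_assoc _ hdT]
  have hds : d ∣ s := hdq.trans hq1s
  have hdr1 : d ∣ r + 1 := hds.trans hrmod
  have hq1r1 : (q - 1) ∣ r + 1 := hq1s.trans hrmod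
  have hr2 : r * r = r ^ 2 := (sq r).symm
  have hr2pos : 1 ≤ r ^ 2 := Nat.one_le_pow _ _ hr
  have hsr2 : s ∣ r ^ 2 - 1 := by
    have h4 : r ^ 2 - 1 = (r + 1) * (r - 1) := by
      obtain ⟨n, rfl⟩ : ∃ n, r = n + 1 := ⟨r - 1, by omega⟩
      have e1 : (n + 1) ^ 2 = n * n + 2 * n + 1 := by ring
      have e2 : (n + 1 + 1) * (n + 1 - 1) = n * n + 2 * n := by
        simp only [Nat.add_sub_cancel]
        ring
      omega
    rw [h4]
    exact hrmod.mul_right _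
  have hks : s * ((r ^ 2 - 1) / s) = r ^ 2 - 1 := Nat.mul_div_cancel' hsr2
  -- Frobenius setup
  have hφq : ∀ a : F, (φ a) ^ q = φ a := by
    intro a
    rw [← map_pow]
    congr 1
    rw [← hq]
    exact FiniteField.pow_card a
  set p := ringChar F with hpdef
  haveI hKp : CharP K p := charP_of_injective_ringHom (algebraMap F K).injective p
  obtain ⟨n, hpprime, hcard⟩ := FiniteField.card F p
  haveI : Fact p.Prime := ⟨hpprime⟩
  have hqpn : q = p ^ (n : ℕ) := by rw [← hq, hcard]
  have hψ : ∀ y : K, (iterateFrobenius K p (n : ℕ)) y = y ^ q := by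
    intro y
    rw [iterateFrobenius_def, ← hqpn]
  -- main argument
  intro x
  by_cases hx : x = 0
  · have h0 : f 0 = 0 := by
      rw [hf, zero_pow (show r ≠ 0 by omega), zero_mul]
    rw [hx, h0, h0]
  · set β : K := x ^ s with hβdef
    have hxcard : x ^ (q ^ m - 1) = 1 := by
      have h5 := FiniteField.pow_card_sub_one_eq_one x hx
      rwa [hK] at h5
    have hβd : β ^ d = 1 := by
      rw [hβdef, ← pow_mul, hsd]
      exact hxcard
    have hβne : β ≠ 0 := by
      intro h6
      rw [h6, zero_pow (show d ≠ 0 by omega)] at hβd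
      exact zero_ne_one hβd
    have hβcong : ∀ a b : ℕ, a ≡ b [MOD d] → β ^ a = β ^ b := by
      have key : ∀ a : ℕ, β ^ a = β ^ (a % d) := by
        intro a
        conv_lhs => rw [← Nat.div_add_mod a d]
        rw [pow_add, pow_mul, hβd, one_pow, one_mul]
      intro a b hab
      rw [key a, key b, hab]
    have hβq : β ^ (q - 1) = 1 := by
      obtain ⟨c, hc⟩ := hdq
      rw [hc, pow_mul, hβd, one_pow]
    have hβr : β ^ r = β⁻¹ := by
      have h7 : β ^ r * β = 1 := by
        rw [← pow_succ]
        obtain ⟨c, hc⟩ := hdr1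
        rw [hc, pow_mul, hβd, one_pow]
      exact eq_inv_of_mul_eq_one_left h7
    set t : K := (h.map φ).eval β with htdef
    have htne : t ≠ 0 := hroot β hβd
    have ht2 : t = Polynomial.eval₂ φ β h := by
      rw [htdef, Polynomial.eval_map]
    have htq : t ^ q = t := by
      have h8 : (iterateFrobenius K p (n : ℕ)) t = t := by
        rw [ht2, Polynomial.hom_eval₂]
        have h9 : (iterateFrobenius K p (n : ℕ)).comp φ = φ := by
          ext a
          rw [RingHom.comp_apply, hψ, hφq]
        have h10 : (iterateFrobenius K p (n : ℕ)) β = β := by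
          rw [hψ]
          have : β ^ q = β ^ (q - 1) * β := by
            rw [← pow_succ]
            congr 1
            omega
          rw [this, hβq, one_mul]
        rw [h9, h10, ← ht2]
      rw [← hψ, h8]
    have htq1 : t ^ (q - 1) = 1 := by
      have h11 : t ^ (q - 1) * t = 1 * t := by
        rw [← pow_succ, one_mul]
        have : q - 1 + 1 = q := by omega
        rw [this, htq]
      exact mul_right_cancel₀ htne h11
    have hts : t ^ s = 1 := by
      obtain ⟨c, hc⟩ := hq1s
      rw [hc, pow_mul, htq1, one_pow]
    have htr1 : t ^ (r + 1) = 1 := by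
      obtain ⟨c, hc⟩ := hq1r1
      rw [hc, pow_mul, htq1, one_pow]
    -- symmetry identity
    have hPdeg : (h.map φ).natDegree < d :=
      lt_of_le_of_lt Polynomial.natDegree_map_le hdeg
    have hG : β ^ e * Polynomial.eval β⁻¹ (h.map φ) = t := by
      rw [htdef, Polynomial.eval_eq_sum_range' hPdeg, Polynomial.eval_eq_sum_range' hPdeg,
        Finset.mul_sum]
      refine Finset.sum_nbij' (fun i => if i ≤ e then e - i else d + e - i)
        (fun i => if i ≤ e then e - i else d + e - i) ?_ ?_ ?_ ?_ ?_
      · intro a ha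
        simp only [Finset.mem_range] at *
        split_ifs <;> omega
      · intro a ha
        simp only [Finset.mem_range] at *
        split_ifs <;> omega
      · intro a ha
        simp only [Finset.mem_range] at ha
        split_ifs <;> omega
      · intro a ha
        simp only [Finset.mem_range] at ha
        split_ifs <;> omega
      · intro i hi
        simp only [Finset.mem_range] at hi
        by_cases hie : i ≤ e
        · simp only [hie, if_true]
          have hc1 : (h.map φ).coeff (e - i) = (h.map φ).coeff i := by
            rw [Polynomial.coeff_map, Polynomial.coeff_map, hsym1 i hie]
          rw [hc1]
          have hpow : β ^ e * (β⁻¹) ^ i = β ^ (e - i) := by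
            rw [inv_pow, ← div_eq_mul_inv, div_eq_iff (pow_ne_zero i hβne), ← pow_add]
            congr 1
            omega
          rw [← hpow]
          ring
        · simp only [hie, if_false]
          have hc1 : (h.map φ).coeff (d + e - i) = (h.map φ).coeff i := by
            rw [Polynomial.coeff_map, Polynomial.coeff_map,
              hsym2 i (by omega) (by omega)]
          rw [hc1]
          have hpow : β ^ e * (β⁻¹) ^ i = β ^ (d + e - i) := by
            rw [inv_pow, ← div_eq_mul_inv, div_eq_iff (pow_ne_zero i hβne), ← pow_add]
            have h12 : d + e - i + i = d + e := by omega
            rw [h12, pow_add, hβd, one_mul]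
          rw [← hpow]
          ring
    have hβe : β ^ e ≠ 0 := pow_ne_zero _ hβne
    have hevalinv : Polynomial.eval β⁻¹ (h.map φ) = (β ^ e)⁻¹ * t := by
      rw [← hG, ← mul_assoc, inv_mul_cancel₀ hβe, one_mul]
    have hfx : f x = x ^ r * t := by rw [hf]
    have hfxs : (f x) ^ s = β ^ r := by
      rw [hfx, mul_pow, hts, mul_one, ← pow_mul, mul_comm r s, pow_mul]
    have hβk : β ^ ((r ^ 2 - 1) / s) = β ^ e := hβcong _ _ hemod
    have hx2 : (x ^ r) ^ r = x * β ^ e := by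
      rw [← pow_mul]
      have h13 : r * r = 1 + s * ((r ^ 2 - 1) / s) := by omega
      rw [h13, pow_add, pow_one, pow_mul, ← hβdef, hβk]
    rw [hf (f x), hfxs, hβr, hfx, mul_pow, hevalinv, hx2]
    have h14 : x * β ^ e * t ^ r * ((β ^ e)⁻¹ * t)
        = x * (β ^ e * (β ^ e)⁻¹) * (t ^ r * t) := by ring
    rw [h14, mul_inv_cancel₀ hβe, ← pow_succ, htr1, mul_one, mul_one]
end

section
/- Let q = 2^k with k ≥ 2, m = d = q-1, s = (q^m - 1)/d, and let a, b ∈ F_q with h(x) = a·x^(q-2) + b·x^(q-3) + b having no root in the group μ_d of d-th roots of unity in F_{q^m}*. Then f(x) = x^(s-1)·h(x^s) is an involution on F_{q^m}. -/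
theorem stmt_10 (F K : Type*) [Field F] [Fintype F] [Field K] [Fintype K] [Algebra F K]
    (q m d s : ℕ) (k : ℕ) (hk : 2 ≤ k) (hq : q = 2 ^ k)
    (hcardF : Fintype.card F = q) (hm : m = q - 1) (hd : d = q - 1)
    (hcardK : Fintype.card K = q ^ m) (hs : s = (q ^ m - 1) / d)
    (a b : F)
    (hroot : ∀ β : K, β ^ d = 1 →
      algebraMap F K a * β ^ (q - 2) + algebraMap F K b * β ^ (q - 3) +
        algebraMap F K b ≠ 0)
    (f : K → K)
    (hf : ∀ x, f x = x ^ (s - 1) *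
      (algebraMap F K a * (x ^ s) ^ (q - 2) + algebraMap F K b * (x ^ s) ^ (q - 3) +
        algebraMap F K b)) :
    ∀ x : K, f (f x) = x := by
  -- numeric preliminaries
  have hq4 : 4 ≤ q := by
    rw [hq]
    calc 4 = 2 ^ 2 := rfl
      _ ≤ 2 ^ k := Nat.pow_le_pow_right (by norm_num) hk
  have hdq : d + 1 = q := by omega
  have hqm4 : 4 ≤ q ^ m := le_trans hq4 (Nat.le_self_pow (by omega) q)
  have hdvd : d ∣ q ^ m - 1 := by
    rw [hd]; simpa using Nat.sub_dvd_pow_sub_pow q 1 m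
  have hsd : s * d = q ^ m - 1 := by rw [hs]; exact Nat.div_mul_cancel hdvd
  have hgeo : (∑ i ∈ Finset.range m, q ^ i) * d = q ^ m - 1 := by
    rw [hd]
    have : ∀ n : ℕ, (∑ i ∈ Finset.range n, q ^ i) * (q - 1) = q ^ n - 1 := by
      intro n
      induction n with
      | zero => simp
      | succ n ih =>
        rw [Finset.sum_range_succ, add_mul, ih, pow_succ]
        have h1 : 1 ≤ q ^ n := Nat.one_le_pow _ _ (by omega)
        have h2 : q ^ n * 1 ≤ q ^ n * q := Nat.mul_le_mul_left _ (by omega)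
        rw [Nat.mul_sub, Nat.mul_one]
        omega
    exact this m
  have hsum : s = ∑ i ∈ Finset.range m, q ^ i := by
    apply Nat.eq_of_mul_eq_mul_right (show 0 < d by omega)
    rw [hsd, hgeo]
  have hds : d ∣ s := by
    have hz : (s : ZMod d) = 0 := by
      rw [hsum]
      push_cast
      have hq1' : (q : ZMod d) = 1 := by
        have : ((d + 1 : ℕ) : ZMod d) = 1 := by push_cast; simp
        rwa [hdq] at this
      simp only [hq1', one_pow, Finset.sum_const, Finset.card_range, nsmul_eq_mul, mul_one, hm]
      rw [← hd, ZMod.natCast_self]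
    exact (ZMod.natCast_eq_zero_iff _ _).mp hz
  have hs3 : 3 ≤ s := by
    have hs0 : s ≠ 0 := by
      intro h; rw [h] at hsd; simp at hsd; omega
    have := Nat.le_of_dvd (by omega) hds
    omega
  -- characteristic 2
  haveI hF2 : Fact (Nat.Prime 2) := ⟨Nat.prime_two⟩
  have hchar2 : ringChar K = 2 := by
    rw [FiniteField.even_card_iff_char_two, hcardK, hq]
    rw [← pow_mul]
    have hm3 : 3 ≤ m := by omega
    obtain ⟨j, hj⟩ : ∃ j, k * m = j + 1 := ⟨k * m - 1, by have := Nat.mul_pos (show 0 < k by omega) (show 0 < m by omega); omega⟩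
    rw [hj, pow_succ, Nat.mul_mod_left]
  haveI hcharK : CharP K 2 := hchar2 ▸ ringChar.charP K
  have frob : ∀ u v : K, (u + v) ^ q = u ^ q + v ^ q := by
    intro u v; rw [hq]; exact add_pow_char_pow u v 2 k
  -- main proof
  intro x
  by_cases hx : x = 0
  · subst hx
    have h0 : f 0 = 0 := by
      rw [hf, zero_pow (show s - 1 ≠ 0 by omega), zero_mul]
    rw [h0, h0]
  · have hxN : x ^ (q ^ m - 1) = 1 := by
      have := FiniteField.pow_card_sub_one_eq_one x hx
      rwa [hcardK] at this
    set A := algebraMap F K a with hA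
    set B := algebraMap F K b with hB
    set y := x ^ s with hy
    set H := A * y ^ (q - 2) + B * y ^ (q - 3) + B with hH
    have hy0 : y ≠ 0 := pow_ne_zero _ hx
    have hyd : y ^ d = 1 := by rw [hy, ← pow_mul, hsd, hxN]
    have hyq : y ^ q = y := by rw [← hdq, pow_succ, hyd, one_mul]
    have hH0 : H ≠ 0 := hroot y hyd
    have haq : a ^ q = a := by rw [← hcardF]; exact FiniteField.pow_card a
    have hbq : b ^ q = b := by rw [← hcardF]; exact FiniteField.pow_card b
    have hAq : A ^ q = A := by rw [hA, ← map_pow, haq]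
    have hBq : B ^ q = B := by rw [hB, ← map_pow, hbq]
    have hHq : H ^ q = H := by
      rw [hH, frob, frob, mul_pow, mul_pow, hAq, hBq,
        pow_right_comm y (q - 2) q, pow_right_comm y (q - 3) q, hyq]
    have hHd : H ^ d = 1 := by
      apply mul_right_cancel₀ hH0
      rw [one_mul, ← pow_succ, hdq, hHq]
    obtain ⟨t2, ht2⟩ := hds
    have hHs : H ^ s = 1 := by rw [ht2, pow_mul, hHd, one_pow]
    have hxss : x ^ (s * s) = 1 := by
      have hss : s * s = (q ^ m - 1) * t2 := by
        nth_rewrite 2 [ht2]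
        rw [← mul_assoc, hsd]
      rw [hss, pow_mul, hxN, one_pow]
    have hs1 : s - 1 + 1 = s := by omega
    have e1 : (s - 1) * s + s = s * s := by
      obtain ⟨t, ht'⟩ : ∃ t, s = t + 1 := ⟨s - 1, by omega⟩
      rw [ht']
      simp only [Nat.add_sub_cancel]
      ring
    have e2 : (s - 1) * (s - 1) + s + s = s * s + 1 := by
      obtain ⟨t, ht'⟩ : ∃ t, s = t + 1 := ⟨s - 1, by omega⟩
      rw [ht']
      simp only [Nat.add_sub_cancel]
      ring
    have hfx : f x = x ^ (s - 1) * H := by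
      rw [hf, hH, hA, hB, hy]
    have hfxs : f x ^ s = y⁻¹ := by
      rw [hfx, mul_pow, ← pow_mul, hHs, mul_one]
      apply eq_inv_of_mul_eq_one_left
      rw [hy, ← pow_add, e1, hxss]
    have h1 : y ^ (q - 2) = y⁻¹ := by
      apply eq_inv_of_mul_eq_one_left
      rw [← pow_succ, show q - 2 + 1 = d by omega, hyd]
    have h2 : y ^ (q - 3) = (y * y)⁻¹ := by
      apply eq_inv_of_mul_eq_one_left
      rw [show y * y = y ^ 2 by ring, ← pow_add, show q - 3 + 2 = d by omega, hyd]
    have hiy2 : (y⁻¹) ^ (q - 2) = y := by rw [inv_pow, h1, inv_inv]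
    have hiy3 : (y⁻¹) ^ (q - 3) = y * y := by rw [inv_pow, h2, inv_inv]
    have hHs1 : H ^ (s - 1) = H⁻¹ := by
      apply eq_inv_of_mul_eq_one_left
      rw [← pow_succ, hs1, hHs]
    have h4 : x ^ ((s - 1) * (s - 1)) = x * (y * y)⁻¹ := by
      rw [eq_mul_inv_iff_mul_eq₀ (mul_ne_zero hy0 hy0)]
      rw [hy, ← mul_assoc, ← pow_add, ← pow_add, e2, pow_succ, hxss, one_mul]
    have hkey : A * y + B * (y * y) + B = y * y * H := by
      have e3 : y ^ (q - 2) * (y * y) = y := by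
        rw [show y * y = y ^ 2 by ring, ← pow_add, show q - 2 + 2 = q by omega, hyq]
      have e4 : y ^ (q - 3) * (y * y) = 1 := by
        rw [show y * y = y ^ 2 by ring, ← pow_add, show q - 3 + 2 = d by omega, hyd]
      calc A * y + B * (y * y) + B
          = A * (y ^ (q - 2) * (y * y)) + B * (y * y) + B * (y ^ (q - 3) * (y * y)) := by
            rw [e3, e4, mul_one]
        _ = y * y * H := by rw [hH]; ring
    rw [hf (f x), hfxs, hiy2, hiy3, hfx, mul_pow, ← pow_mul, h4, hHs1, hkey]
    field_simp
end

section
/- Let q = 3^(2k) for a positive integer k, m = 4, d = 4, s = (q⁴-1)/4, and a, b, c ∈ F_q such that h(x) = a·x³ + b·x² + a·x + c has no root in the group μ_4 of fourth roots of unity in F_{q⁴}*. Then f(x) = x^(q⁴ - 2)·h(x^((q⁴-1)/4)) is an involution on F_{q⁴}. -/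
theorem stmt_11 (F K : Type*) [Field F] [Fintype F] [Field K] [Fintype K] [Algebra F K]
    (q : ℕ) (k : ℕ) (hk : 0 < k) (hq : q = 3 ^ (2 * k))
    (hcardF : Fintype.card F = q) (hcardK : Fintype.card K = q ^ 4)
    (a b c : F)
    (hroot : ∀ β : K, β ^ 4 = 1 →
      algebraMap F K a * β ^ 3 + algebraMap F K b * β ^ 2 +
        algebraMap F K a * β + algebraMap F K c ≠ 0)
    (f : K → K)
    (hf : ∀ x, f x = x ^ (q ^ 4 - 2) *
      (algebraMap F K a * (x ^ ((q ^ 4 - 1) / 4)) ^ 3 +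
        algebraMap F K b * (x ^ ((q ^ 4 - 1) / 4)) ^ 2 +
        algebraMap F K a * x ^ ((q ^ 4 - 1) / 4) + algebraMap F K c)) :
    ∀ x : K, f (f x) = x := by
  have hq9 : 9 ≤ q := by
    subst hq
    calc (9:ℕ) = 3 ^ (2*1) := by norm_num
    _ ≤ 3 ^ (2*k) := Nat.pow_le_pow_right (by norm_num) (by omega)
  have hqmod : q % 4 = 1 := by
    subst hq; rw [pow_mul, Nat.pow_mod]; norm_num
  have hq4mod : q ^ 4 % 4 = 1 := by rw [Nat.pow_mod, hqmod]
  have hq2mod : q ^ 2 % 4 = 1 := by rw [Nat.pow_mod, hqmod]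
  have hq3mod : q ^ 3 % 4 = 1 := by rw [Nat.pow_mod, hqmod]
  set s : ℕ := (q ^ 4 - 1) / 4 with hs
  have hq4big : 9 ^ 4 ≤ q ^ 4 := Nat.pow_le_pow_left hq9 4
  have hs4 : 4 * s = q ^ 4 - 1 := by
    have h : (4:ℕ) ∣ q ^ 4 - 1 := by omega
    rw [hs, Nat.mul_div_cancel' h]
  obtain ⟨m, hm⟩ : ∃ m, q = m + 1 := ⟨q - 1, by omega⟩
  have hfac : q ^ 4 - 1 = (q - 1) * (q ^ 3 + q ^ 2 + q + 1) := by
    subst hm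
    have h1 : (m+1) ^ 4 = m * ((m+1) ^ 3 + (m+1) ^ 2 + (m+1) + 1) + 1 := by ring
    simp only [Nat.add_sub_cancel]
    omega
  obtain ⟨t, ht⟩ : ∃ t, q ^ 3 + q ^ 2 + q + 1 = 4 * t := ⟨(q^3+q^2+q+1)/4, by omega⟩
  have hst : s = (q - 1) * t := by
    have h : 4 * s = 4 * ((q - 1) * t) := by rw [hs4, hfac, ht]; ring
    omega
  obtain ⟨u4, hu4⟩ : ∃ u, q - 1 = 4 * u := ⟨(q-1)/4, by omega⟩
  -- characteristic 3
  have hchar : CharP K 3 := by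
    obtain ⟨n, hp, hcard⟩ := FiniteField.card K (ringChar K)
    have h3 : ringChar K = 3 := by
      have hdvd3 : ringChar K ∣ 3 ^ (8 * k) := by
        have h1 : ringChar K ∣ (ringChar K) ^ (n:ℕ) := dvd_pow_self _ n.ne_zero
        rw [← hcard, hcardK, hq, ← pow_mul] at h1
        convert h1 using 2; ring
      exact (Nat.prime_dvd_prime_iff_eq hp Nat.prime_three).mp
        (hp.dvd_of_dvd_pow hdvd3)
    rw [← h3]; exact ringChar.charP K
  haveI := hchar
  -- the Frobenius x ↦ x^q
  have hφ : ∀ z : K, iterateFrobenius K 3 (2*k) z = z ^ q := fun z => by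
    rw [iterateFrobenius_def, hq]
  set A : K := algebraMap F K a with hA
  set B : K := algebraMap F K b with hB
  set C : K := algebraMap F K c with hC
  have hAq : A ^ q = A := by
    rw [hA, ← map_pow, ← hcardF, FiniteField.pow_card]
  have hBq : B ^ q = B := by
    rw [hB, ← map_pow, ← hcardF, FiniteField.pow_card]
  have hCq : C ^ q = C := by
    rw [hC, ← map_pow, ← hcardF, FiniteField.pow_card]
  -- key: for β ∈ μ₄, H β := Aβ³+Bβ²+Aβ+C satisfies H^s = 1
  have key : ∀ β : K, β ^ 4 = 1 →
      (A * β ^ 3 + B * β ^ 2 + A * β + C) ^ s = 1 := by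
    intro β hβ
    set H : K := A * β ^ 3 + B * β ^ 2 + A * β + C with hH
    have hβq : β ^ q = β := by
      have : β ^ (q - 1) = 1 := by
        rw [hu4, pow_mul, hβ, one_pow]
      calc β ^ q = β ^ (q - 1) * β := by
            rw [← pow_succ]; congr 1; omega
      _ = β := by rw [this, one_mul]
    have hHq : H ^ q = H := by
      have := hφ H
      rw [hH] at this ⊢
      rw [← this]
      simp only [map_add, map_mul, map_pow]
      simp only [hφ]
      rw [hAq, hBq, hCq, hβq]
    have hH0 : H ≠ 0 := hroot β hβ
    have hHq1 : H ^ (q - 1) = 1 := by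
      have h1 : H ^ (q - 1) * H = 1 * H := by
        rw [← pow_succ, one_mul]
        calc H ^ (q - 1 + 1) = H ^ q := by congr 1; omega
        _ = H := hHq
      exact mul_right_cancel₀ hH0 h1
    rw [hst, pow_mul, hHq1, one_pow]
  -- main argument
  intro x
  by_cases hx : x = 0
  · have h0 : f 0 = 0 := by
      rw [hf, zero_pow (by omega), zero_mul]
    rw [hx, h0, h0]
  · -- x ≠ 0
    have hx1 : x ^ (q ^ 4 - 1) = 1 := by
      rw [← hcardK]; exact FiniteField.pow_card_sub_one_eq_one x hx
    have hinv : ∀ z : K, z ≠ 0 → z ^ (q ^ 4 - 2) = z⁻¹ := by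
      intro z hz
      have hz1 : z ^ (q ^ 4 - 1) = 1 := by
        rw [← hcardK]; exact FiniteField.pow_card_sub_one_eq_one z hz
      field_simp
      calc z ^ (q ^ 4 - 2) * z = z ^ (q ^ 4 - 1) := by
            rw [← pow_succ]; congr 1; omega
      _ = 1 := hz1
    set β : K := x ^ s with hβdef
    have hβ4 : β ^ 4 = 1 := by
      rw [hβdef, ← pow_mul, mul_comm, hs4, hx1]
    set H : K := A * β ^ 3 + B * β ^ 2 + A * β + C with hH
    have hH0 : H ≠ 0 := hroot β hβ4
    have hfx : f x = x⁻¹ * H := by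
      rw [hf, hinv x hx]
    set y : K := x⁻¹ * H with hy
    have hy0 : y ≠ 0 := mul_ne_zero (inv_ne_zero hx) hH0
    have hys : y ^ s = β ^ 3 := by
      have h1 : y ^ s = (x ^ s)⁻¹ * H ^ s := by
        rw [hy, mul_pow, inv_pow]
      rw [h1, key β hβ4, mul_one, ← hβdef]
      have hmul : β * β ^ 3 = 1 := by
        calc β * β ^ 3 = β ^ 4 := by ring
        _ = 1 := hβ4
      exact inv_eq_of_mul_eq_one_right hmul
    have hHy : A * (y ^ s) ^ 3 + B * (y ^ s) ^ 2 + A * y ^ s + C = H := by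
      rw [hys, hH]
      have h9 : (β ^ 3) ^ 3 = β := by
        calc (β ^ 3) ^ 3 = (β ^ 4) ^ 2 * β := by ring
        _ = β := by rw [hβ4, one_pow, one_mul]
      have h6 : (β ^ 3) ^ 2 = β ^ 2 := by
        calc (β ^ 3) ^ 2 = β ^ 4 * β ^ 2 := by ring
        _ = β ^ 2 := by rw [hβ4, one_mul]
      rw [h9, h6]
      ring
    rw [hfx, hf y, hinv y hy0, hHy, hy]
    rw [mul_inv_rev, inv_inv, mul_comm H⁻¹ x, mul_assoc, inv_mul_cancel₀ hH0, mul_one]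
end

section
/- Let q be a prime power, and let r, d be integers with r ≡ -1 (mod q-1) and d ≡ r-1 (mod q+1). Let h ∈ F_{q²}[x] have degree d, h(0) ≠ 0, and satisfy (x^d·h(x⁻¹))^q = h(x^q) for all x ∈ F_{q²}*. Then f(x) = x^r·h(x^(q-1)) is an involution on F_{q²} if and only if h has no root in the group μ_{q+1} of (q+1)-st roots of unity in F_{q²}*. -/
private lemma aux_pow_congr {M : Type*} [Monoid M] {x : M} {n a b : ℕ}
    (hx : x ^ n = 1) (hab : a ≡ b [MOD n]) : x ^ a = x ^ b := by
  rcases le_total a b with hle | hle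
  · obtain ⟨t, ht⟩ := (Nat.modEq_iff_dvd' hle).mp hab
    have hb : b = a + n * t := by omega
    rw [hb, pow_add, pow_mul, hx, one_pow, mul_one]
  · obtain ⟨t, ht⟩ := (Nat.modEq_iff_dvd' hle).mp hab.symm
    have ha : a = b + n * t := by omega
    rw [ha, pow_add, pow_mul, hx, one_pow, mul_one]

theorem stmt_12 (K : Type*) [Field K] [Fintype K]
    (q : ℕ) (hq : 2 ≤ q) (hK : Fintype.card K = q ^ 2)
    (r d : ℕ) (hr : 0 < r) (hrmod : (q - 1) ∣ (r + 1))
    (hdmod : d ≡ r - 1 [MOD q + 1])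
    (h : Polynomial K) (hdeg : h.natDegree = d) (h0 : h.coeff 0 ≠ 0)
    (hfe : ∀ x : K, x ≠ 0 → (x ^ d * h.eval x⁻¹) ^ q = h.eval (x ^ q))
    (f : K → K) (hf : ∀ x, f x = x ^ r * h.eval (x ^ (q - 1))) :
    (∀ x : K, f (f x) = x) ↔ ∀ β : K, β ^ (q + 1) = 1 → h.eval β ≠ 0 := by
  have hq1 : 1 ≤ q := by omega
  have hfact : (q - 1) * (q + 1) = q ^ 2 - 1 := by
    apply Nat.eq_sub_of_add_eq
    zify [hq1]; ring
  have hcard1 : ∀ x : K, x ≠ 0 → x ^ (q ^ 2 - 1) = 1 := by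
    intro x hx
    have := FiniteField.pow_card_sub_one_eq_one x hx
    rwa [hK] at this
  have hf0 : f 0 = 0 := by
    rw [hf, zero_pow (by omega : r ≠ 0), zero_mul]
  -- modular fact: q*q ≡ 1 [MOD q+1]
  have hqq_mod : 1 ≡ q * q [MOD q + 1] := by
    rw [Nat.modEq_iff_dvd' (by nlinarith : 1 ≤ q * q)]
    exact ⟨q - 1, by zify [hq1, (show 1 ≤ q * q by nlinarith)]; ring⟩
  -- surjectivity of (q-1)-power map onto μ_{q+1}
  have surj : ∀ β : K, β ^ (q + 1) = 1 → ∃ x : K, x ≠ 0 ∧ x ^ (q - 1) = β := by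
    intro β hβ
    have hβ0 : β ≠ 0 := by
      intro h0'; rw [h0', zero_pow (by omega : q + 1 ≠ 0)] at hβ
      exact zero_ne_one hβ
    set βu : Kˣ := Units.mk0 β hβ0 with hβu
    obtain ⟨g, hg⟩ := IsCyclic.exists_generator (α := Kˣ)
    have hord : orderOf g = q ^ 2 - 1 := by
      rw [orderOf_eq_card_of_forall_mem_zpowers hg, Nat.card_units, Nat.card_eq_fintype_card, hK]
    obtain ⟨m, hm⟩ := Subgroup.mem_zpowers_iff.mp (hg βu)
    have hβu1 : βu ^ (q + 1) = 1 := by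
      ext; push_cast [hβu]; exact hβ
    have h1 : g ^ (m * (q + 1) : ℤ) = 1 := by
      rw [zpow_mul, hm]
      rw [show ((q : ℤ) + 1) = ((q + 1 : ℕ) : ℤ) by push_cast; ring, zpow_natCast, hβu1]
    have hdvd : ((q ^ 2 - 1 : ℕ) : ℤ) ∣ m * ((q : ℤ) + 1) := by
      rw [← hord]
      exact orderOf_dvd_iff_zpow_eq_one.mpr h1
    have hdvd2 : ((q : ℤ) - 1) ∣ m := by
      have hc : ((q ^ 2 - 1 : ℕ) : ℤ) = ((q : ℤ) - 1) * ((q : ℤ) + 1) := by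
        rw [← hfact]; push_cast [hq1]; ring
      rw [hc] at hdvd
      exact (mul_dvd_mul_iff_right (show ((q : ℤ) + 1) ≠ 0 by positivity)).mp hdvd
    obtain ⟨t, ht⟩ := hdvd2
    refine ⟨((g ^ t : Kˣ) : K), Units.ne_zero _, ?_⟩
    have hu : (g ^ t) ^ (q - 1) = βu := by
      rw [← zpow_natCast (g ^ t) (q - 1), ← zpow_mul, show ((q - 1 : ℕ) : ℤ) = (q : ℤ) - 1 by push_cast [hq1]; ring]
      rw [show t * ((q : ℤ) - 1) = m by rw [ht]; ring]
      exact hm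
    calc ((g ^ t : Kˣ) : K) ^ (q - 1) = (((g ^ t) ^ (q - 1) : Kˣ) : K) := by push_cast; ring
      _ = β := by rw [hu]; rfl
  -- key identity from functional equation
  have lemA : ∀ γ : K, γ ≠ 0 → γ ^ (q + 1) = 1 → γ ^ d * (h.eval γ) ^ q = h.eval γ := by
    intro γ hγ hγ1
    have h1 := hfe (γ ^ q) (pow_ne_zero q hγ)
    have hinv : (γ ^ q)⁻¹ = γ := by
      apply inv_eq_of_mul_eq_one_right
      rw [← pow_succ]; exact hγ1
    have hqq : (γ ^ q) ^ q = γ := by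
      rw [← pow_mul]
      have := aux_pow_congr hγ1 hqq_mod.symm
      simpa using this
    rw [hinv, hqq, mul_pow, ← pow_mul, ← pow_mul] at h1
    have e : γ ^ (q * (d * q)) = γ ^ d := by
      apply aux_pow_congr hγ1
      have : d * 1 ≡ d * (q * q) [MOD q + 1] := Nat.ModEq.mul_left d hqq_mod
      calc q * (d * q) = d * (q * q) := by ring
        _ ≡ d * 1 [MOD q + 1] := this.symm
        _ = d := by ring
    rwa [e] at h1
  constructor
  · intro hinv β hβ1 hroot
    obtain ⟨x, hx0, hxβ⟩ := surj β hβ1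
    have hfx : f x = 0 := by rw [hf, hxβ, hroot, mul_zero]
    have := hinv x
    rw [hfx, hf0] at this
    exact hx0 this.symm
  · intro hnoroot x
    by_cases hx : x = 0
    · rw [hx, hf0, hf0]
    · set β := x ^ (q - 1) with hβdef
      have hβ1 : β ^ (q + 1) = 1 := by
        rw [hβdef, ← pow_mul, hfact]; exact hcard1 x hx
      have hβ0 : β ≠ 0 := pow_ne_zero _ hx
      have hhβ : h.eval β ≠ 0 := hnoroot β hβ1
      have key : (h.eval β) ^ (q - 1) * β ^ d = 1 := by
        have hA := lemA β hβ0 hβ1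
        rw [show q = (q - 1) + 1 by omega, pow_succ] at hA
        apply mul_right_cancel₀ hhβ
        calc (h.eval β) ^ (q - 1) * β ^ d * h.eval β
            = β ^ d * ((h.eval β) ^ (q - 1) * h.eval β) := by ring
          _ = h.eval β := hA
          _ = 1 * h.eval β := (one_mul _).symm
      have hyq : (f x) ^ (q - 1) = β := by
        rw [hf, mul_pow, ← pow_mul]
        have e1 : x ^ (r * (q - 1)) = β ^ r := by rw [hβdef, ← pow_mul, mul_comm]
        rw [e1]
        have e2 : β ^ r = β ^ (d + 1) := by
          apply aux_pow_congr hβ1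
          have := Nat.ModEq.add_right 1 hdmod
          rw [show r - 1 + 1 = r by omega] at this
          exact this.symm
        rw [e2, pow_succ]
        calc β ^ d * β * (h.eval β) ^ (q - 1)
            = (h.eval β) ^ (q - 1) * β ^ d * β := by ring
          _ = β := by rw [key, one_mul]
      obtain ⟨k, hk⟩ := hrmod
      have key2 : (h.eval β) ^ (r + 1) * β ^ (d * k) = 1 := by
        rw [hk, pow_mul, pow_mul, ← mul_pow, key, one_pow]
      rw [hf (f x), hyq, hf x]
      have expand : (x ^ r * h.eval β) ^ r * h.eval β
          = x ^ (r * r) * (h.eval β) ^ (r + 1) := by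
        rw [mul_pow, ← pow_mul, pow_succ]; ring
      rw [expand]
      have hβdk : β ^ (d * k) ≠ 0 := pow_ne_zero _ hβ0
      apply mul_right_cancel₀ hβdk
      have hrr : x ^ (r * r) = x * β ^ (d * k) := by
        have hBA : (q - 1) * (r - 1) * k ≡ (q - 1) * d * k [MOD q ^ 2 - 1] := by
          rw [← hfact]
          exact (Nat.ModEq.mul_left' (q - 1) hdmod.symm).mul_right k
        have hid1 : r * r = (q - 1) * (r - 1) * k + 1 := by
          have e : (q - 1) * (r - 1) * k = (r - 1) * ((q - 1) * k) := by ring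
          rw [e, ← hk]
          zify [hr]; ring
        have hmod : r * r ≡ 1 + (q - 1) * (d * k) [MOD q ^ 2 - 1] := by
          rw [hid1, show 1 + (q - 1) * (d * k) = (q - 1) * d * k + 1 by ring]
          exact hBA.add_right 1
        calc x ^ (r * r) = x ^ (1 + (q - 1) * (d * k)) :=
              aux_pow_congr (hcard1 x hx) hmod
          _ = x * β ^ (d * k) := by rw [pow_add, pow_one, pow_mul, ← hβdef]
      calc x ^ (r * r) * (h.eval β) ^ (r + 1) * β ^ (d * k)
          = x ^ (r * r) * ((h.eval β) ^ (r + 1) * β ^ (d * k)) := by ring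
        _ = x ^ (r * r) := by rw [key2, mul_one]
        _ = x * β ^ (d * k) := hrr
end

section
/- Let q be a prime power with q ≡ 1 (mod 4) and let a ∈ F_{q²}* satisfy a^((q²-1)/2) ≠ -1. Then f(x) = a·x^(q²-3q+1) + a^q·x^(q-2) is an involution on F_{q²}. -/
theorem stmt_13 (K : Type*) [Field K] [Fintype K]
    (q : ℕ) (hq : q % 4 = 1) (hq2 : 2 ≤ q) (hK : Fintype.card K = q ^ 2)
    (a : K) (ha : a ≠ 0) (hacond : a ^ ((q ^ 2 - 1) / 2) ≠ -1)
    (f : K → K)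
    (hf : ∀ x, f x = a * x ^ (q ^ 2 - 3 * q + 1) + a ^ q * x ^ (q - 2)) :
    ∀ x : K, f (f x) = x := by
  obtain ⟨j, rfl⟩ : ∃ j, q = 4*j+5 := ⟨(q-5)/4, by omega⟩
  have hsq : (4*j+5)^2 = 16*j^2+40*j+25 := by ring
  have E1 : (4*j+5)^2 - 3*(4*j+5) + 1 = 16*j^2+28*j+11 := by omega
  have E2 : (4*j+5) - 2 = 4*j+3 := by omega
  have E3 : ((4*j+5)^2 - 1)/2 = 8*j^2+20*j+12 := by omega
  have E4 : (4*j+5)^2 - 1 = 16*j^2+40*j+24 := by omega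
  -- characteristic and Frobenius
  have hchar : CharP K (ringChar K) := ringChar.charP K
  obtain ⟨m, hp, hm⟩ := FiniteField.card K (ringChar K)
  obtain ⟨n, hn, hqn⟩ : ∃ n ≤ (m:ℕ), 4*j+5 = (ringChar K) ^ n := by
    refine (Nat.dvd_prime_pow hp).mp ?_
    rw [← hm, hK]
    exact dvd_pow_self _ two_ne_zero
  haveI : Fact (Nat.Prime (ringChar K)) := ⟨hp⟩
  have frob : ∀ u v : K, (u+v)^(4*j+5) = u^(4*j+5) + v^(4*j+5) := by
    intro u v; rw [hqn]; exact add_pow_char_pow ..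
  -- a ^ q² = a
  have aq : a ^ ((4*j+5)*(4*j+5)) = a := by
    have h := FiniteField.pow_card a
    rwa [hK, show (4*j+5)^2 = (4*j+5)*(4*j+5) from sq _] at h
  -- decomposition lemma
  have hdec : ∀ z : K, f z = z^(4*j+3) * (a * (z^(4*j+4))^(4*j+2) + a^(4*j+5)) := by
    intro z
    rw [hf z, E1, E2]
    ring
  have hf0 : f 0 = 0 := by
    rw [hdec 0, zero_pow (by omega), zero_mul]
  intro x
  by_cases hx : x = 0
  · rw [hx, hf0, hf0]
  · have hxN : x ^ (16*j^2+40*j+24) = 1 := by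
      have h := FiniteField.pow_card_sub_one_eq_one x hx
      rwa [hK, E4] at h
    have key : ∀ A B t : ℕ, A = B + t*(16*j^2+40*j+24) → x^A = x^B := by
      rintro A B t rfl
      rw [pow_add, pow_mul', hxN, one_pow, mul_one]
    -- c ≠ 0
    have hc : a * (x^(4*j+4))^(4*j+2) + a^(4*j+5) ≠ 0 := by
      intro h0
      have h1 : a * (x^(4*j+4))^(4*j+2) = -a^(4*j+5) := eq_neg_of_add_eq_zero_left h0
      have h2 : (a * (x^(4*j+4))^(4*j+2))^(2*j+3) = (-a^(4*j+5))^(2*j+3) := by rw [h1]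
      have hodd : Odd (2*j+3) := ⟨j+1, by ring⟩
      rw [hodd.neg_pow] at h2
      have hy2 : x ^ ((4*j+4)*((4*j+2)*(2*j+3))) = 1 := by
        calc x ^ ((4*j+4)*((4*j+2)*(2*j+3))) = x ^ 0 := key _ 0 (2*j+1) (by ring)
        _ = 1 := pow_zero x
      have h3 : a^(2*j+3) * (1 + a^(8*j^2+20*j+12)) = 0 := by
        have h4 : (a^(4*j+5))^(2*j+3) = a^(2*j+3) * a^(8*j^2+20*j+12) := by
          rw [← pow_mul, ← pow_add]; congr 1; ring
        rw [h4] at h2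
        linear_combination h2 - a^(2*j+3) * hy2
      rcases mul_eq_zero.mp h3 with h5 | h5
      · exact pow_ne_zero _ ha h5
      · exact hacond (by rw [E3]; linear_combination h5)
    -- c^(q) = y^4 * c
    have hcq : (a * (x^(4*j+4))^(4*j+2) + a^(4*j+5))^(4*j+4+1)
        = (x^(4*j+4))^4 * (a * (x^(4*j+4))^(4*j+2) + a^(4*j+5)) := by
      have h1 : x^((4*j+4)*((4*j+2)*(4*j+5))) = x^((4*j+4)*4) := key _ _ (4*j+1) (by ring)
      have h2 : x^((4*j+4)*(4*j+6)) = 1 := by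
        calc x ^ ((4*j+4)*(4*j+6)) = x ^ 0 := key _ 0 1 (by ring)
        _ = 1 := pow_zero x
      rw [show 4*j+4+1 = 4*j+5 from by omega, frob]
      linear_combination a^(4*j+5) * h1 + aq - a * h2
    have hc4 : (a * (x^(4*j+4))^(4*j+2) + a^(4*j+5))^(4*j+4) = (x^(4*j+4))^4 := by
      rw [pow_succ] at hcq
      exact mul_right_cancel₀ hc hcq
    have hdx : f x = x^(4*j+3) * (a * (x^(4*j+4))^(4*j+2) + a^(4*j+5)) := hdec x
    have hw : (f x)^(4*j+4) = x^(4*j+4) := by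
      rw [hdx, mul_pow, hc4, ← pow_mul, ← pow_mul, ← pow_add]
      exact key _ _ 1 (by ring)
    rw [hdec (f x), hw, hdx, mul_pow, mul_assoc, ← pow_succ,
      show 4*j+3+1 = 4*j+4 from by omega, hc4, ← pow_mul, ← pow_mul, ← pow_add]
    calc x ^ ((4*j+3)*(4*j+3) + (4*j+4)*4) = x ^ 1 := key _ 1 1 (by ring)
    _ = x := pow_one x
end

section
/- Let q be a prime power with q ≡ 3 (mod 8) and let a ∈ F_{q²}* satisfy a^((q²-1)/4) ≠ -1. Then f(x) = a·x^(q²-3q+1) + a^q·x^(q-2) is an involution on F_{q²}. -/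
theorem stmt_14 (K : Type*) [Field K] [Fintype K]
    (q : ℕ) (hq : q % 8 = 3) (hK : Fintype.card K = q ^ 2)
    (a : K) (ha : a ≠ 0) (hacond : a ^ ((q ^ 2 - 1) / 4) ≠ -1)
    (f : K → K)
    (hf : ∀ x, f x = a * x ^ (q ^ 2 - 3 * q + 1) + a ^ q * x ^ (q - 2)) :
    ∀ x : K, f (f x) = x := by
  have hq3 : 3 ≤ q := by omega
  have h3q : 3 * q ≤ q ^ 2 := by nlinarith
  -- Frobenius additivity
  have hfrob : ∀ u v : K, (u + v) ^ q = u ^ q + v ^ q := by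
    obtain ⟨p, hchar⟩ := CharP.exists K
    haveI := hchar
    obtain ⟨n, hp, hcard⟩ := FiniteField.card K p
    haveI : Fact p.Prime := ⟨hp⟩
    have hqdvd : q ∣ p ^ (n : ℕ) := by
      rw [← hcard, hK]
      exact dvd_pow_self q (by norm_num)
    obtain ⟨k, hk, hqk⟩ := (Nat.dvd_prime_pow hp).mp hqdvd
    intro u v
    rw [hqk]
    exact add_pow_char_pow u v p k
  have hcardpow : ∀ z : K, z ^ (q ^ 2) = z := fun z => by
    rw [← hK]; exact FiniteField.pow_card z
  -- key identity
  have hkey : ∀ z : K, f z * z ^ (3 * q + 2) = a * z ^ 4 + a ^ q * z ^ (4 * q) := by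
    intro z
    rw [hf, add_mul, mul_assoc, mul_assoc, ← pow_add, ← pow_add]
    have e1 : q ^ 2 - 3 * q + 1 + (3 * q + 2) = q ^ 2 + 3 := by zify [h3q]; ring
    have e2 : q - 2 + (3 * q + 2) = 4 * q := by omega
    rw [e1, e2, pow_add, hcardpow]
    ring
  intro x
  rcases eq_or_ne x 0 with rfl | hx
  · have h0 : f 0 = 0 := by
      rw [hf]
      rw [zero_pow (Nat.succ_ne_zero _), zero_pow (by omega : q - 2 ≠ 0)]
      ring
    rw [h0, h0]
  · set T := a * x ^ 4 + a ^ q * x ^ (4 * q) with hT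
    have hx1 : x ^ (q ^ 2 - 1) = 1 := by
      rw [← hK]; exact FiniteField.pow_card_sub_one_eq_one x hx
    obtain ⟨t, ht⟩ : ∃ t, q = 8 * t + 3 := ⟨q / 8, by omega⟩
    have hT0 : T ≠ 0 := by
      intro h
      have hu0 : a * x ^ 4 ≠ 0 := mul_ne_zero ha (pow_ne_zero _ hx)
      have hu : (a * x ^ 4) ^ q = -(a * x ^ 4) := by
        have h2 : a ^ q * x ^ (4 * q) = (a * x ^ 4) ^ q := by
          rw [mul_pow, ← pow_mul, mul_comm 4 q]
        rw [hT, h2] at h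
        linear_combination h
      have h1 : (a * x ^ 4) ^ (q - 1) * (a * x ^ 4) = (-1) * (a * x ^ 4) := by
        rw [← pow_succ, Nat.sub_add_cancel (by omega : 1 ≤ q), hu]; ring
      have h2 : (a * x ^ 4) ^ (q - 1) = -1 := mul_right_cancel₀ hu0 h1
      have h3 : ((a * x ^ 4) ^ (q - 1)) ^ (2 * t + 1) = -1 := by
        rw [h2]
        exact Odd.neg_one_pow ⟨t, by ring⟩
      rw [← pow_mul] at h3
      have hN : q ^ 2 - 1 = 4 * ((q - 1) * (2 * t + 1)) := by
        subst ht
        have h9 : (8 * t + 3) ^ 2 = 64 * t ^ 2 + 48 * t + 9 := by ring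
        have h8 : (8 * t + 3 - 1) = 8 * t + 2 := by omega
        rw [h9, h8]
        have : (8 * t + 2) * (2 * t + 1) = 16 * t ^ 2 + 12 * t + 2 := by ring
        omega
      have hdiv : (q ^ 2 - 1) / 4 = (q - 1) * (2 * t + 1) := by
        rw [hN]; exact Nat.mul_div_cancel_left _ (by norm_num)
      have h5 : (a * x ^ 4) ^ ((q - 1) * (2 * t + 1)) =
          a ^ ((q ^ 2 - 1) / 4) * x ^ (q ^ 2 - 1) := by
        rw [mul_pow, ← pow_mul, hdiv, ← hN]
      rw [h5, hx1, mul_one] at h3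
      exact hacond h3
    have hTq : T ^ q = T := by
      have haq : a ^ (q * q) = a := by
        rw [← pow_two q] at *
        exact hcardpow a
      have hxq : (x ^ (4 * q)) ^ q = x ^ 4 := by
        rw [← pow_mul, show 4 * q * q = q ^ 2 * 4 by ring, pow_mul, hcardpow]
      rw [hT, hfrob, mul_pow, mul_pow, ← pow_mul, ← pow_mul, haq, hxq,
        mul_comm 4 q, pow_mul, add_comm]
    set y := f x with hydef
    have hy : y * x ^ (3 * q + 2) = T := hkey x
    have hy0 : y ≠ 0 := by
      intro h
      rw [h, zero_mul] at hy
      exact hT0 hy.symm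
    have hyq : y ^ q * x ^ (2 * q + 3) = T := by
      have h1 : (y * x ^ (3 * q + 2)) ^ q = T := by rw [hy, hTq]
      rw [mul_pow, ← pow_mul] at h1
      have h2 : x ^ ((3 * q + 2) * q) = x ^ 3 * x ^ (2 * q) := by
        have : x ^ ((3 * q + 2) * q) = (x ^ (q ^ 2)) ^ 3 * x ^ (2 * q) := by
          rw [← pow_mul, ← pow_add]
          congr 1
          ring
        rw [this, hcardpow]
      rw [h2] at h1
      rw [← h1]
      ring
    have hxp : ∀ n : ℕ, x ^ n ≠ 0 := fun n => pow_ne_zero n hx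
    have hyv : y = T / x ^ (3 * q + 2) := by
      rw [eq_div_iff (hxp _)]; exact hy
    have hyqv : y ^ q = T / x ^ (2 * q + 3) := by
      rw [eq_div_iff (hxp _)]; exact hyq
    have hy32 : y ^ (3 * q + 2) = (y ^ q) ^ 3 * y ^ 2 := by
      rw [← pow_mul, ← pow_add]
      congr 1
      ring
    have hy4q : y ^ (4 * q) = (y ^ q) ^ 4 := by
      rw [← pow_mul]
      congr 1
      ring
    have hyp : y ^ (3 * q + 2) ≠ 0 := pow_ne_zero _ hy0
    have hmain : f y * y ^ (3 * q + 2) = x * y ^ (3 * q + 2) := by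
      rw [hkey y, hy32, hy4q, hyqv, hyv, hT]
      field_simp
      ring
    exact mul_right_cancel₀ hyp hmain
end

section
/- Let q be a prime power with q ≡ 7 (mod 8) and let a ∈ F_{q²}* satisfy a^((q²-1)/4) ≠ 1. Then f(x) = a·x^(q²-3q+1) + a^q·x^(q-2) is an involution on F_{q²}. -/
theorem stmt_15 (K : Type*) [Field K] [Fintype K]
    (q : ℕ) (hq : q % 8 = 7) (hK : Fintype.card K = q ^ 2)
    (a : K) (ha : a ≠ 0) (hacond : a ^ ((q ^ 2 - 1) / 4) ≠ 1)
    (f : K → K)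
    (hf : ∀ x, f x = a * x ^ (q ^ 2 - 3 * q + 1) + a ^ q * x ^ (q - 2)) :
    ∀ x : K, f (f x) = x := by
  have hq7 : 7 ≤ q := by omega
  have h1q : 1 ≤ q := by omega
  -- characteristic facts
  obtain ⟨p, hcp⟩ := CharP.exists K
  haveI := hcp
  obtain ⟨n, hp, hcard⟩ := FiniteField.card K p
  haveI : Fact p.Prime := ⟨hp⟩
  have hqdvd : q ∣ p ^ (n : ℕ) := by
    rw [← hcard, hK]; exact dvd_pow_self q (by norm_num)
  obtain ⟨k, hkn, hqk⟩ := (Nat.dvd_prime_pow hp).mp hqdvd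
  have hfrob : ∀ u v : K, (u + v) ^ q = u ^ q + v ^ q := by
    intro u v; rw [hqk]; exact add_pow_char_pow u v p k
  have hpowcard : ∀ z : K, z ^ q ^ 2 = z := by
    intro z; rw [← hK]; exact FiniteField.pow_card z
  -- arithmetic structure
  obtain ⟨s, hs⟩ : ∃ s, q + 1 = 8 * s := ⟨(q + 1) / 8, by omega⟩
  set m := 2 * s with hm
  have h4m : 4 * m = q + 1 := by omega
  have hdiv : (q ^ 2 - 1) / 4 = (q - 1) * m := by
    have hkey : q ^ 2 - 1 = 4 * ((q - 1) * m) := by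
      have h1q2 : 1 ≤ q ^ 2 := by nlinarith
      have h4m' : (4 : ℤ) * m = q + 1 := by exact_mod_cast h4m
      zify [h1q, h1q2]
      linear_combination (1 - (q : ℤ)) * h4m'
    rw [hkey, Nat.mul_div_cancel_left _ (by norm_num : 0 < 4)]
  -- the power identities
  have key1 : ∀ z : K, z ^ (q ^ 2 - 3 * q + 1) * (z ^ q) ^ 3 = z ^ 2 := by
    intro z
    rw [← pow_mul, ← pow_add,
      show (q ^ 2 - 3 * q + 1) + q * 3 = q ^ 2 + 1 from by
        have h3q : 3 * q ≤ q ^ 2 := by nlinarith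
        zify [h3q]; ring]
    rw [pow_succ, hpowcard]
    exact (sq z).symm
  have key2 : ∀ z : K, z ^ (q - 2) * z ^ 2 = z ^ q := by
    intro z; rw [← pow_add]; congr 1; omega
  -- the nonvanishing of the "norm-type" quantity
  have hSne : ∀ x : K, x ≠ 0 → a * x ^ 4 + a ^ q * (x ^ q) ^ 4 ≠ 0 := by
    intro x hx hzero
    have h1 : a * x ^ 4 = -(a ^ q * (x ^ q) ^ 4) := by linear_combination hzero
    have h2 : (a * x ^ 4) ^ m = (a ^ q * (x ^ q) ^ 4) ^ m := by
      rw [h1, hm, pow_mul, pow_mul, neg_sq]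
    have e1 : (x ^ 4) ^ m = x ^ q * x := by rw [← pow_mul, h4m, pow_succ]
    have e2 : ((x ^ q) ^ 4) ^ m = x ^ q * x := by
      rw [← pow_mul, ← pow_mul,
        show q * (4 * m) = q ^ 2 + q from by rw [h4m]; ring,
        pow_add, hpowcard, mul_comm]
    rw [mul_pow, mul_pow, e1, e2, ← pow_mul] at h2
    have h4 : a ^ m = a ^ (q * m) :=
      mul_right_cancel₀ (mul_ne_zero (pow_ne_zero _ hx) hx) h2
    have h5 : a ^ ((q - 1) * m) = 1 := by
      have h6 : a ^ m * a ^ ((q - 1) * m) = a ^ m * 1 := by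
        rw [mul_one, ← pow_add,
          show m + (q - 1) * m = q * m from by zify [h1q]; ring]
        exact h4.symm
      exact mul_left_cancel₀ (pow_ne_zero m ha) h6
    exact hacond (by rw [hdiv]; exact h5)
  -- main proof
  intro x
  by_cases hx : x = 0
  · have h0 : f 0 = 0 := by
      rw [hf, zero_pow (by omega : q - 2 ≠ 0),
        zero_pow (Nat.succ_ne_zero (q ^ 2 - 3 * q)), mul_zero, mul_zero, add_zero]
    rw [hx, h0, h0]
  · have hxq : x ^ q ≠ 0 := pow_ne_zero _ hx
    have hS0 : a * x ^ 4 + a ^ q * (x ^ q) ^ 4 ≠ 0 := hSne x hx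
    have haq : (a ^ q) ^ q = a := by
      rw [← pow_mul, ← pow_two]; exact hpowcard a
    have hxqq : (x ^ q) ^ q = x := by
      rw [← pow_mul, ← pow_two]; exact hpowcard x
    have hA : (x ^ (q ^ 2 - 3 * q + 1)) ^ q * x ^ 3 = (x ^ q) ^ 2 := by
      have h' := key1 (x ^ q)
      rw [show (x ^ q) ^ (q ^ 2 - 3 * q + 1) = (x ^ (q ^ 2 - 3 * q + 1)) ^ q from by
          rw [← pow_mul, ← pow_mul, mul_comm],
        show ((x ^ q) ^ q) ^ 3 = x ^ 3 from by rw [hxqq]] at h'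
      exact h'
    have hB : (x ^ (q - 2)) ^ q * (x ^ q) ^ 2 = x := by
      have h' := key2 (x ^ q)
      rw [show (x ^ q) ^ (q - 2) = (x ^ (q - 2)) ^ q from by
          rw [← pow_mul, ← pow_mul, mul_comm],
        hxqq] at h'
      exact h'
    have hy : f x * (x ^ 2 * (x ^ q) ^ 3) = a * x ^ 4 + a ^ q * (x ^ q) ^ 4 := by
      rw [hf]
      linear_combination (a * x ^ 2) * key1 x + (a ^ q * (x ^ q) ^ 3) * key2 x
    have hyq : (f x) ^ q * (x ^ 3 * (x ^ q) ^ 2) = a * x ^ 4 + a ^ q * (x ^ q) ^ 4 := by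
      rw [hf, hfrob, mul_pow, mul_pow, haq]
      linear_combination (a ^ q * (x ^ q) ^ 2) * hA + (a * x ^ 3) * hB
    have hD1 : x ^ 2 * (x ^ q) ^ 3 ≠ 0 := mul_ne_zero (pow_ne_zero _ hx) (pow_ne_zero _ hxq)
    have hD2 : x ^ 3 * (x ^ q) ^ 2 ≠ 0 := mul_ne_zero (pow_ne_zero _ hx) (pow_ne_zero _ hxq)
    have hy0 : f x ≠ 0 := by
      intro h; rw [h, zero_mul] at hy; exact hS0 hy.symm
    have hy' : f x = (a * x ^ 4 + a ^ q * (x ^ q) ^ 4) / (x ^ 2 * (x ^ q) ^ 3) :=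
      eq_div_of_mul_eq hD1 hy
    have hyq' : (f x) ^ q = (a * x ^ 4 + a ^ q * (x ^ q) ^ 4) / (x ^ 3 * (x ^ q) ^ 2) :=
      eq_div_of_mul_eq hD2 hyq
    have P : a * (f x) ^ 4 + a ^ q * ((f x) ^ q) ^ 4
        = x * ((f x) ^ 2 * ((f x) ^ q) ^ 3) := by
      rw [hyq', hy']
      field_simp
    have hE : (f x) ^ 2 * ((f x) ^ q) ^ 3 ≠ 0 :=
      mul_ne_zero (pow_ne_zero _ hy0) (pow_ne_zero _ (pow_ne_zero _ hy0))
    rw [hf (f x)]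
    refine mul_right_cancel₀ hE ?_
    linear_combination (a * (f x) ^ 2) * key1 (f x)
      + (a ^ q * ((f x) ^ q) ^ 3) * key2 (f x) + P
end

section
/- Let q be a prime power, s a divisor of q-1, d = (q-1)/s with gcd(s,d) = 1, and r an integer with r² ≡ 1 (mod s). Let h ∈ F_q[x] with h(μ_d) ⊆ μ_d, where μ_d is the group of d-th roots of unity in F_q*. Then f(x) = x^r·h(x^s) is an involution on F_q if and only if g(x) = x^r·h(x)^s is an involution on μ_d. -/
lemma aux_exists_pow (F : Type*) [Field F] [Fintype F] (s d : ℕ)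
    (hsd : s * d = Fintype.card F - 1) (z : F) (hz : z ^ d = 1) :
    ∃ x : F, x ^ s = z := by
  classical
  have hd0 : 0 < d := by
    rcases Nat.eq_zero_or_pos d with h0 | h0
    · exfalso
      rw [h0, mul_zero] at hsd
      have : 1 < Fintype.card F := Fintype.one_lt_card
      omega
    · exact h0
  have hz0 : z ≠ 0 := by
    intro h0
    rw [h0, zero_pow hd0.ne'] at hz
    exact zero_ne_one hz
  set u : Fˣ := Units.mk0 z hz0 with hu
  obtain ⟨gen, hgen⟩ := IsCyclic.exists_generator (α := Fˣ)
  obtain ⟨k, hk⟩ := hgen u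
  simp only at hk
  have hcard : orderOf gen = s * d := by
    rw [orderOf_eq_card_of_forall_mem_zpowers hgen, Nat.card_eq_fintype_card,
      Fintype.card_units, hsd]
  have hud : u ^ d = 1 := by
    ext
    push_cast
    simpa [hu] using hz
  have hdvd : ((s * d : ℕ) : ℤ) ∣ k * d := by
    have h1 : gen ^ (k * (d : ℤ)) = 1 := by
      rw [zpow_mul, hk]
      simpa using hud
    have h2 := orderOf_dvd_iff_zpow_eq_one.mpr h1
    rwa [hcard] at h2
  have hsk : (s : ℤ) ∣ k := by
    push_cast at hdvd
    rcases hdvd with ⟨c, hc⟩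
    refine ⟨c, ?_⟩
    have h3 : (k - s * c) * d = 0 := by ring_nf; linarith [hc]
    have hd0' : (d : ℤ) ≠ 0 := by exact_mod_cast hd0.ne'
    rcases mul_eq_zero.mp h3 with h1 | h1
    · linarith
    · exact absurd h1 hd0'
  obtain ⟨m, hm⟩ := hsk
  refine ⟨((gen ^ m : Fˣ) : F), ?_⟩
  have key : (gen ^ m) ^ s = u := by
    rw [← zpow_natCast, ← zpow_mul, mul_comm, ← hm]; exact hk
  calc ((gen ^ m : Fˣ) : F) ^ s = (((gen ^ m) ^ s : Fˣ) : F) :=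
        (Units.val_pow_eq_pow_val _ _).symm
    _ = z := by rw [key]; rfl
lemma aux_pow_swap {M : Type*} [CommMonoid M] (a : M) (m n : ℕ) :
    (a ^ m) ^ n = (a ^ n) ^ m := by
  rw [← pow_mul, mul_comm, pow_mul]

theorem stmt_17 (F : Type*) [Field F] [Fintype F]
    (r s d : ℕ) (hr : 0 < r) (hspos : 0 < s)
    (hs : s ∣ Fintype.card F - 1) (hd : d = (Fintype.card F - 1) / s)
    (hgcd : Nat.gcd s d = 1) (hrmod : r ^ 2 ≡ 1 [MOD s])
    (h : Polynomial F)
    (hmu : ∀ z : F, z ^ d = 1 → (h.eval z) ^ d = 1)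
    (f g : F → F)
    (hf : ∀ x, f x = x ^ r * h.eval (x ^ s))
    (hg : ∀ x, g x = x ^ r * (h.eval x) ^ s) :
    (∀ x : F, f (f x) = x) ↔ (∀ z : F, z ^ d = 1 → g (g z) = z) := by
  have hsd : s * d = Fintype.card F - 1 := by
    rw [hd]; exact Nat.mul_div_cancel' hs
  have hd0 : 0 < d := by
    rcases Nat.eq_zero_or_pos d with h0 | h0
    · exfalso
      rw [h0, mul_zero] at hsd
      have : 1 < Fintype.card F := Fintype.one_lt_card
      omega
    · exact h0
  -- key identity: (f y)^s = g (y^s)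
  have key : ∀ y : F, (f y) ^ s = g (y ^ s) := by
    intro y
    rw [hf y, hg, mul_pow, ← pow_mul, ← pow_mul, mul_comm r s]
  constructor
  · -- forward
    intro hff z hz
    obtain ⟨x, hx⟩ := aux_exists_pow F s d hsd z hz
    calc g (g z) = g ((f x) ^ s) := by rw [key, hx]
      _ = (f (f x)) ^ s := (key (f x)).symm
      _ = z := by rw [hff x, hx]
  · -- backward
    intro hgg x
    by_cases hx0 : x = 0
    · have f0 : f 0 = 0 := by
        rw [hf]; simp [zero_pow hr.ne']
      rw [hx0, f0, f0]
    · obtain ⟨z, hzdef, hz⟩ : ∃ z : F, x ^ s = z ∧ z ^ d = 1 :=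
        ⟨x ^ s, rfl, by
          rw [← pow_mul, hsd]
          exact FiniteField.pow_card_sub_one_eq_one x hx0⟩
      have hz0 : z ≠ 0 := by
        intro h0
        rw [h0, zero_pow hd0.ne'] at hz
        exact zero_ne_one hz
      obtain ⟨w, hwdef⟩ : ∃ w : F, g z = w := ⟨_, rfl⟩
      have hw : w ^ d = 1 := by
        calc w ^ d = (z ^ r) ^ d * ((h.eval z) ^ s) ^ d := by
              rw [← hwdef, hg, mul_pow]
          _ = (z ^ d) ^ r * ((h.eval z) ^ d) ^ s := by
              rw [aux_pow_swap z r d, aux_pow_swap (h.eval z) s d]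
          _ = 1 := by rw [hz, hmu z hz, one_pow, one_pow, one_mul]
      -- s divides r^2 - 1
      obtain ⟨k, hk⟩ : s ∣ r ^ 2 - 1 := by
        have h1 : 1 ≤ r ^ 2 := Nat.one_le_pow _ _ hr
        exact (Nat.modEq_iff_dvd' h1).mp hrmod.symm
      have hrr : r * r = (r ^ 2 - 1) + 1 := by
        have : 1 ≤ r ^ 2 := Nat.one_le_pow _ _ hr
        rw [← pow_two]; omega
      obtain ⟨φ, hφdef⟩ : ∃ φ : F,
          x ^ (r ^ 2 - 1) * (h.eval z) ^ r * h.eval w = φ := ⟨_, rfl⟩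
      have hfx : f x = x ^ r * h.eval z := by rw [hf, hzdef]
      have hfxs : (f x) ^ s = w := by rw [key x, hzdef, hwdef]
      have hfa : f (f x) = x * φ := by
        calc f (f x) = (x ^ r * h.eval z) ^ r * h.eval w := by
              rw [hf (f x), hfxs, hfx]
          _ = x ^ (r * r) * (h.eval z) ^ r * h.eval w := by
              rw [mul_pow, ← pow_mul]
          _ = x * (x ^ (r ^ 2 - 1) * (h.eval z) ^ r * h.eval w) := by
              rw [hrr, pow_succ]; ring
          _ = x * φ := by rw [hφdef]
      have hφd : φ ^ d = 1 := by
        have hx1 : (x ^ (r ^ 2 - 1)) ^ d = 1 := by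
          rw [← pow_mul, hk, show s * k * d = s * d * k by ring, pow_mul, hsd,
            FiniteField.pow_card_sub_one_eq_one x hx0, one_pow]
        have hx2 : ((h.eval z) ^ r) ^ d = 1 := by
          rw [aux_pow_swap, hmu z hz, one_pow]
        calc φ ^ d
            = (x ^ (r ^ 2 - 1)) ^ d * ((h.eval z) ^ r) ^ d * (h.eval w) ^ d := by
              rw [← hφdef, mul_pow, mul_pow]
          _ = 1 := by rw [hx1, hx2, hmu w hw, one_mul, one_mul]
      have hφs : φ ^ s = 1 := by
        have hgw : w ^ r * (h.eval w) ^ s = z := by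
          have h1 := hgg z hz
          rwa [hwdef, hg w] at h1
        have hwr : w ^ r = z * ((x ^ (r ^ 2 - 1)) ^ s * ((h.eval z) ^ r) ^ s) := by
          calc w ^ r = (z ^ r * (h.eval z) ^ s) ^ r := by rw [← hwdef, hg]
            _ = z ^ (r * r) * ((h.eval z) ^ r) ^ s := by
                rw [mul_pow, ← pow_mul, aux_pow_swap]
            _ = z * ((x ^ (r ^ 2 - 1)) ^ s * ((h.eval z) ^ r) ^ s) := by
                rw [hrr, pow_succ, ← hzdef, aux_pow_swap x]; ring
        have hcancel : z * ((x ^ (r ^ 2 - 1)) ^ s * ((h.eval z) ^ r) ^ s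
            * (h.eval w) ^ s) = z * 1 := by
          rw [mul_one]
          calc z * ((x ^ (r ^ 2 - 1)) ^ s * ((h.eval z) ^ r) ^ s * (h.eval w) ^ s)
              = (z * ((x ^ (r ^ 2 - 1)) ^ s * ((h.eval z) ^ r) ^ s)) * (h.eval w) ^ s := by
                ring
            _ = w ^ r * (h.eval w) ^ s := by rw [hwr]
            _ = z := hgw
        have h2 := mul_left_cancel₀ hz0 hcancel
        calc φ ^ s
            = (x ^ (r ^ 2 - 1)) ^ s * ((h.eval z) ^ r) ^ s * (h.eval w) ^ s := by
              rw [← hφdef, mul_pow, mul_pow]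
          _ = 1 := h2
      have hφ1 : φ = 1 := by
        have h1 : orderOf φ ∣ s := orderOf_dvd_of_pow_eq_one hφs
        have h2 : orderOf φ ∣ d := orderOf_dvd_of_pow_eq_one hφd
        have h3 : orderOf φ ∣ 1 := hgcd ▸ Nat.dvd_gcd h1 h2
        exact orderOf_eq_one_iff.mp (Nat.dvd_one.mp h3)
      rw [hfa, hφ1, mul_one]
end

section
/- Let q be a prime power and m, r positive integers with gcd(q-1, m) = 1 and r² ≡ 1 (mod (q^m-1)/(q-1)). Let h ∈ F_q[x]. Then f(x) = x^r·h(x^((q^m-1)/(q-1))) is an involution on F_{q^m} if and only if g(x) = x^r·h(x)^m is an involution on F_q. -/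
/-!
With `s = (q ^ m - 1) / (q - 1)` and `N : K → F` the norm, `x ^ s = N x`, so
`f x = x ^ r * h (N x)`; as `N` is multiplicative and `N c = c ^ m` on `F`, it semiconjugates
`f` to `g`. Since `N` is onto, `f ∘ f = id` forces `g ∘ g = id`. Conversely, `r ^ 2 = s k + 1`
gives `f (f x) = x * c` with `c ∈ F`, and `g ∘ g = id` gives `N (f (f x)) = N x`, i.e.
`c ^ m = 1` for `x ≠ 0`; together with `c ^ (q - 1) = 1` and `gcd (q - 1, m) = 1`, `c = 1`.
-/

open Polynomial

theorem FiniteField.eq_one_of_pow_eq_one_of_coprime {F : Type*} [GroupWithZero F] [Fintype F]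
    {c : F} {n : ℕ} (hn : n ≠ 0) (hcop : (Fintype.card F - 1).Coprime n) (hc : c ^ n = 1) :
    c = 1 := by
  have hc0 : c ≠ 0 := by
    rintro rfl
    simp [zero_pow hn] at hc
  simpa [hcop.gcd_eq_one] using
    pow_gcd_eq_one.mpr ⟨FiniteField.pow_card_sub_one_eq_one c hc0, hc⟩

section NormOfFiniteExtension

variable {F K : Type*} [Field F] [Field K] [Algebra F K] [Finite K]

theorem FiniteField.pow_eq_mul_algebraMap_norm_pow {x : K} {n k : ℕ}
    (hn : n = (Nat.card K - 1) / (Nat.card F - 1) * k + 1) :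
    x ^ n = x * algebraMap F K (Algebra.norm F x ^ k) := by
  rw [hn, pow_succ, pow_mul, ← FiniteField.algebraMap_norm_eq_pow, map_pow, mul_comm]

theorem FiniteField.mul_algebraMap_eq_self_of_norm_eq [Fintype F]
    (hcop : (Fintype.card F - 1).Coprime (Module.finrank F K)) {x : K} {c : F}
    (hnorm : Algebra.norm F (x * algebraMap F K c) = Algebra.norm F x) :
    x * algebraMap F K c = x := by
  rcases eq_or_ne x 0 with rfl | hx
  · rw [zero_mul]
  rw [map_mul, Algebra.norm_algebraMap] at hnorm
  have hc : c ^ Module.finrank F K = 1 :=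
    mul_left_cancel₀ (Algebra.norm_ne_zero_iff.mpr hx) (hnorm.trans (mul_one _).symm)
  rw [FiniteField.eq_one_of_pow_eq_one_of_coprime Module.finrank_pos.ne' hcop hc, map_one,
    mul_one]

end NormOfFiniteExtension

theorem stmt_18_general (F K : Type*) [Field F] [Fintype F] [Field K] [Fintype K] [Algebra F K]
    (q m r : ℕ) (hq : Fintype.card F = q) (hK : Fintype.card K = q ^ m)
    (hr : 0 < r)
    (hgcd : Nat.gcd (q - 1) m = 1)
    (hrmod : r ^ 2 ≡ 1 [MOD (q ^ m - 1) / (q - 1)])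
    (h : Polynomial F)
    (f : K → K)
    (hf : ∀ x, f x = x ^ r * (h.map (algebraMap F K)).eval (x ^ ((q ^ m - 1) / (q - 1))))
    (g : F → F)
    (hg : ∀ x, g x = x ^ r * (h.eval x) ^ m) :
    (∀ x : K, f (f x) = x) ↔ (∀ x : F, g (g x) = x) := by
  set N := Algebra.norm F (S := K)
  have hrank : Module.finrank F K = m :=
    Nat.pow_right_injective (hq ▸ Fintype.one_lt_card)
      (by simpa only [hq, hK] using (Module.card_eq_pow_finrank (K := F) (V := K)).symm)
  have hs : (q ^ m - 1) / (q - 1) = (Nat.card K - 1) / (Nat.card F - 1) := by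
    rw [Nat.card_eq_fintype_card, Nat.card_eq_fintype_card, hq, hK]
  have hf' (x : K) : f x = x ^ r * algebraMap F K (h.eval (N x)) := by
    rw [hf, hs, ← FiniteField.algebraMap_norm_eq_pow, eval_map, eval₂_at_apply]
  have hsemiconj (x : K) : N (f x) = g (N x) := by
    rw [hf', hg, map_mul, map_pow, Algebra.norm_algebraMap, hrank]
  constructor
  · intro hff y
    obtain ⟨x, rfl⟩ := FiniteField.norm_surjective F K y
    rw [← hsemiconj, ← hsemiconj, hff]
  · intro hgg x
    obtain ⟨k, hk⟩ : (q ^ m - 1) / (q - 1) ∣ r ^ 2 - 1 :=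
      (Nat.modEq_iff_dvd' (Nat.one_le_pow _ _ hr)).mp hrmod.symm
    have hr2 : r ^ 2 = (Nat.card K - 1) / (Nat.card F - 1) * k + 1 := by
      rw [← hs, ← hk, Nat.sub_add_cancel (Nat.one_le_pow 2 r hr)]
    have hffx : f (f x) =
        x * algebraMap F K (N x ^ k * (h.eval (N x) ^ r * h.eval (g (N x)))) := by
      rw [hf' (f x), hsemiconj, hf' x, mul_pow, ← pow_mul, ← sq,
        FiniteField.pow_eq_mul_algebraMap_norm_pow hr2]
      simp only [map_mul, map_pow]
      ring
    rw [hffx]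
    refine FiniteField.mul_algebraMap_eq_self_of_norm_eq (hq ▸ hrank ▸ hgcd) ?_
    rw [← hffx, hsemiconj, hsemiconj, hgg]

theorem stmt_18 (F K : Type*) [Field F] [Fintype F] [Field K] [Fintype K] [Algebra F K]
    (q m r : ℕ) (hq : Fintype.card F = q) (hK : Fintype.card K = q ^ m)
    (hm : 0 < m) (hr : 0 < r)
    (hgcd : Nat.gcd (q - 1) m = 1)
    (hrmod : r ^ 2 ≡ 1 [MOD (q ^ m - 1) / (q - 1)])
    (h : Polynomial F)
    (f : K → K)
    (hf : ∀ x, f x = x ^ r * (h.map (algebraMap F K)).eval (x ^ ((q ^ m - 1) / (q - 1))))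
    (g : F → F)
    (hg : ∀ x, g x = x ^ r * (h.eval x) ^ m) :
    (∀ x : K, f (f x) = x) ↔ (∀ x : F, g (g x) = x) :=
  stmt_18_general F K q m r hq hK hr hgcd hrmod h f hf g hg
end
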